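/- arXiv:math/0703863 — 4 statements merged into one kernel-verified Lean document; each statement's English description precedes it below -/
import Mathlib

section
/- Let w : (0,∞) → ℝ satisfy the asymptotics w(r) = A₀ r^{−1/2} e^{−r}(1 + O(1/r)) with A₀ > 0. Then for any two points ξᵢ, ξⱼ ∈ ℝ² with |ξᵢ − ξⱼ| = L, one has ∫_{ℝ²} w(|z−ξᵢ|)⁴ w(|z−ξⱼ|)² dz ≤ C e^{−2L} for some constant C independent of L ≥ 1. -/
open MeasureTheory

lemma exp_le_aux (t : ℝ) (ht : 0 ≤ t) :
    Real.exp (-2 * t) ≤ (27/8 : ℝ) * ((1:ℝ) + t) ^ (-(3:ℝ)) := by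
  have h1 : (1:ℝ) + t ≤ (3/2 : ℝ) * Real.exp (2*t/3) := by
    have h2 : (2*t/3) + 1 ≤ Real.exp (2*t/3) := Real.add_one_le_exp _
    nlinarith
  have h3 : ((1:ℝ) + t) ^ (3:ℕ) ≤ ((3/2 : ℝ) * Real.exp (2*t/3)) ^ (3:ℕ) :=
    pow_le_pow_left₀ (by linarith) h1 3
  have h4 : ((3/2 : ℝ) * Real.exp (2*t/3)) ^ (3:ℕ) = (27/8 : ℝ) * Real.exp (2*t) := by
    have h4a : ((3:ℕ):ℝ) * (2*t/3) = 2*t := by push_cast; ring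
    rw [mul_pow, ← Real.exp_nat_mul, h4a]
    norm_num
  have h5 : (0:ℝ) < 1 + t := by linarith
  have h6 : ((1:ℝ) + t) ^ (-(3:ℝ)) = (((1:ℝ) + t) ^ (3:ℕ))⁻¹ := by
    rw [Real.rpow_neg h5.le, ← Real.rpow_natCast]
    norm_num
  rw [h6]
  have hpow : (0:ℝ) < ((1:ℝ) + t) ^ (3:ℕ) := pow_pos h5 3
  have h7 : (27/8:ℝ) * (((1:ℝ)+t)^(3:ℕ))⁻¹ = 27/8 / ((1:ℝ)+t)^(3:ℕ) := by ring
  rw [h7, le_div_iff₀ hpow]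
  have hexp : Real.exp (-2 * t) * Real.exp (2 * t) = 1 := by
    rw [← Real.exp_add]; norm_num
  calc Real.exp (-2 * t) * ((1:ℝ) + t) ^ (3:ℕ)
      ≤ Real.exp (-2 * t) * ((27/8 : ℝ) * Real.exp (2*t)) := by
        apply mul_le_mul_of_nonneg_left (h4 ▸ h3) (Real.exp_pos _).le
    _ = (27/8 : ℝ) * (Real.exp (-2 * t) * Real.exp (2 * t)) := by ring
    _ = 27/8 := by rw [hexp, mul_one]

lemma integrable_exp_neg_two_norm :
    Integrable (fun z : EuclideanSpace ℝ (Fin 2) => Real.exp (-2 * ‖z‖)) := by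
  have hb : Integrable (fun z : EuclideanSpace ℝ (Fin 2) =>
      (27/8 : ℝ) * ((1:ℝ) + ‖z‖) ^ (-(3:ℝ))) :=
    (integrable_one_add_norm (by simp [finrank_euclideanSpace]; norm_num)).const_mul _
  refine hb.mono' ?_ ?_
  · exact (Real.continuous_exp.comp (continuous_const.mul continuous_norm)).aestronglyMeasurable
  · filter_upwards with z
    rw [Real.norm_eq_abs, abs_of_pos (Real.exp_pos _)]
    exact exp_le_aux ‖z‖ (norm_nonneg z)

theorem stmt5 (w : ℝ → ℝ) (C₀ : ℝ) (hC₀ : 0 < C₀)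
    (hpos : ∀ r > 0, 0 < w r)
    (hdec : AntitoneOn w (Set.Ioi 0))
    (hbdd : ∀ r > 0, w r ≤ C₀)
    (hdecay : ∀ r ≥ 1, w r ≤ C₀ * r ^ (-(1/2 : ℝ)) * Real.exp (-r)) :
    ∃ C > 0, ∀ ξi ξj : EuclideanSpace ℝ (Fin 2), 1 ≤ ‖ξi - ξj‖ →
      ∫ z, (w ‖z - ξi‖)^4 * (w ‖z - ξj‖)^2 ≤ C * Real.exp (-2 * ‖ξi - ξj‖) := by
  set C₁ : ℝ := Real.exp 1 * C₀ with hC₁def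
  have hC₁ : 0 < C₁ := mul_pos (Real.exp_pos 1) hC₀
  -- pointwise exponential bound on w
  have hw : ∀ r > 0, w r ≤ C₁ * Real.exp (-r) := by
    intro r hr
    rcases le_or_gt 1 r with h1 | h1
    · calc w r ≤ C₀ * r ^ (-(1/2 : ℝ)) * Real.exp (-r) := hdecay r h1
        _ ≤ C₀ * 1 * Real.exp (-r) := by
            apply mul_le_mul_of_nonneg_right _ (Real.exp_pos _).le
            apply mul_le_mul_of_nonneg_left _ hC₀.le
            calc r ^ (-(1/2 : ℝ)) ≤ r ^ (0 : ℝ) :=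
              Real.rpow_le_rpow_of_exponent_le h1 (by norm_num)
              _ = 1 := Real.rpow_zero r
        _ ≤ C₁ * Real.exp (-r) := by
            apply mul_le_mul_of_nonneg_right _ (Real.exp_pos _).le
            nlinarith [Real.add_one_le_exp (1:ℝ)]
    · have he : Real.exp 1 * Real.exp (-1) = 1 := by rw [← Real.exp_add]; norm_num
      have hm : Real.exp (-1) ≤ Real.exp (-r) := Real.exp_le_exp.2 (by linarith)
      have := hbdd r hr
      have hE1 : (0:ℝ) < Real.exp 1 := Real.exp_pos 1
      rw [hC₁def]
      nlinarith
  set I : ℝ := ∫ z : EuclideanSpace ℝ (Fin 2), Real.exp (-2 * ‖z‖) with hIdef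
  have hI : 0 ≤ I := integral_nonneg fun z => (Real.exp_pos _).le
  refine ⟨C₁^6 * (I + 1), by positivity, fun ξi ξj hL => ?_⟩
  set L : ℝ := ‖ξi - ξj‖ with hLdef
  have h1 : ∀ᵐ z : EuclideanSpace ℝ (Fin 2), z ≠ ξi := by
    refine ae_iff.mpr ?_
    simpa using measure_singleton (α := EuclideanSpace ℝ (Fin 2)) ξi
  have h2 : ∀ᵐ z : EuclideanSpace ℝ (Fin 2), z ≠ ξj := by
    refine ae_iff.mpr ?_
    simpa using measure_singleton (α := EuclideanSpace ℝ (Fin 2)) ξj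
  have hgint : Integrable (fun z : EuclideanSpace ℝ (Fin 2) =>
      C₁^6 * Real.exp (-2*L) * Real.exp (-2 * ‖z - ξi‖)) :=
    (integrable_exp_neg_two_norm.comp_sub_right ξi).const_mul _
  have hnonneg : 0 ≤ᵐ[volume] fun z : EuclideanSpace ℝ (Fin 2) =>
      (w ‖z - ξi‖)^4 * (w ‖z - ξj‖)^2 :=
    Filter.Eventually.of_forall fun z => by positivity
  have hfg : (fun z : EuclideanSpace ℝ (Fin 2) => (w ‖z - ξi‖)^4 * (w ‖z - ξj‖)^2)
      ≤ᵐ[volume] fun z => C₁^6 * Real.exp (-2*L) * Real.exp (-2 * ‖z - ξi‖) := by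
    filter_upwards [h1, h2] with z hz1 hz2
    have ha : 0 < ‖z - ξi‖ := by
      rw [norm_pos_iff]; exact sub_ne_zero.mpr hz1
    have hb : 0 < ‖z - ξj‖ := by
      rw [norm_pos_iff]; exact sub_ne_zero.mpr hz2
    set a := ‖z - ξi‖
    set b := ‖z - ξj‖
    have htri : L ≤ a + b := by
      have := dist_triangle ξi z ξj
      rw [dist_eq_norm, dist_eq_norm, dist_eq_norm] at this
      calc L = ‖ξi - ξj‖ := rfl
        _ ≤ ‖ξi - z‖ + ‖z - ξj‖ := this
        _ = a + b := by rw [norm_sub_rev ξi z]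
    have h4 : (w a)^4 ≤ (C₁ * Real.exp (-a))^4 :=
      pow_le_pow_left₀ (hpos a ha).le (hw a ha) 4
    have h2' : (w b)^2 ≤ (C₁ * Real.exp (-b))^2 :=
      pow_le_pow_left₀ (hpos b hb).le (hw b hb) 2
    have e1 : (Real.exp (-a))^(4:ℕ) = Real.exp (-(4*a)) := by
      rw [← Real.exp_nat_mul]; congr 1; push_cast; ring
    have e2 : (Real.exp (-b))^(2:ℕ) = Real.exp (-(2*b)) := by
      rw [← Real.exp_nat_mul]; congr 1; push_cast; ring
    calc (w a)^4 * (w b)^2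
        ≤ (C₁ * Real.exp (-a))^4 * (C₁ * Real.exp (-b))^2 :=
          mul_le_mul h4 h2' (by positivity) (by positivity)
      _ = C₁^6 * Real.exp (-(4*a) + -(2*b)) := by
          rw [Real.exp_add, ← e1, ← e2]; ring
      _ ≤ C₁^6 * Real.exp (-2*L + -2*a) := by
          apply mul_le_mul_of_nonneg_left _ (by positivity)
          exact Real.exp_le_exp.2 (by linarith)
      _ = C₁^6 * Real.exp (-2*L) * Real.exp (-2 * a) := by
          rw [Real.exp_add]; ring
  calc ∫ z, (w ‖z - ξi‖)^4 * (w ‖z - ξj‖)^2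
      ≤ ∫ z : EuclideanSpace ℝ (Fin 2),
          C₁^6 * Real.exp (-2*L) * Real.exp (-2 * ‖z - ξi‖) :=
        integral_mono_of_nonneg hnonneg hgint hfg
    _ = C₁^6 * Real.exp (-2*L) * I := by
        rw [integral_const_mul, hIdef,
          integral_sub_right_eq_self (fun z : EuclideanSpace ℝ (Fin 2) => Real.exp (-2 * ‖z‖)) ξi]
    _ ≤ C₁^6 * (I + 1) * Real.exp (-2 * L) := by
        have h6 : (0:ℝ) < C₁^6 := by positivity
        nlinarith [Real.exp_pos (-2*L)]
end

section
/- Let f ∈ L¹(ℝ²) ∩ L²(ℝ²) with ∫_{ℝ²} f = 0 and |f(z)| ≤ M (1+|z|)^{−(2+α)} for some α > 0. Then the function ψ(z) = (1/2π) ∫_{ℝ²} log(|τ||z|/|z−τ|) f(τ) dτ is well-defined and bounded: |ψ(z)| ≤ C·M for all z ∈ ℝ², with C depending only on α. -/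
open MeasureTheory Metric

namespace Stmt16Aux

noncomputable abbrev E2 := EuclideanSpace ℝ (Fin 2)

noncomputable def F : E2 → ℝ := (ball (0:E2) 1).indicator fun w => ‖w‖⁻¹

lemma F_nonneg (w : E2) : 0 ≤ F w := by
  unfold F
  by_cases h : w ∈ ball (0:E2) 1
  · rw [Set.indicator_of_mem h]; positivity
  · rw [Set.indicator_of_notMem h]

lemma inv_le_F_add_one (w : E2) : ‖w‖⁻¹ ≤ F w + 1 := by
  unfold F
  by_cases h : w ∈ ball (0:E2) 1
  · rw [Set.indicator_of_mem h]; linarith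
  · rw [Set.indicator_of_notMem h]
    have h1 : (1:ℝ) ≤ ‖w‖ := by simpa [mem_ball, dist_zero_right, not_lt] using h
    have := inv_le_one_of_one_le₀ h1
    linarith

lemma log1p_le (u : ℝ) (hu : 0 ≤ u) : Real.log (1+u) ≤ u := by
  have := Real.log_le_sub_one_of_pos (x := 1+u) (by linarith)
  linarith

lemma log1p_nonneg (u : ℝ) (hu : 0 ≤ u) : 0 ≤ Real.log (1+u) :=
  Real.log_nonneg (by linarith)

lemma abs_log_le (b : ℝ) (hb : 0 < b) : |Real.log b| ≤ Real.log (1+b) + b⁻¹ := by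
  have hinv : 0 < b⁻¹ := by positivity
  rw [abs_le]
  constructor
  · have h1 : -Real.log b = Real.log b⁻¹ := (Real.log_inv b).symm
    have h2 : Real.log b⁻¹ ≤ b⁻¹ - 1 := Real.log_le_sub_one_of_pos hinv
    have h3 : 0 ≤ Real.log (1+b) := log1p_nonneg b hb.le
    linarith
  · have h1 : Real.log b ≤ Real.log (1+b) := Real.log_le_log hb (by linarith)
    linarith

lemma log_ratio_bound (z τ : E2) (hz : 1 ≤ ‖z‖) (hτz : z - τ ≠ 0) :
    |Real.log (‖z‖/‖z-τ‖)| ≤ 2*Real.log (1+‖τ‖) + ‖z-τ‖⁻¹ := by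
  set s := ‖z-τ‖ with hs
  have hspos : 0 < s := norm_pos_iff.2 hτz
  have hzpos : (0:ℝ) < ‖z‖ := lt_of_lt_of_le one_pos hz
  have hτ : (0:ℝ) ≤ ‖τ‖ := norm_nonneg _
  have hlogτ : 0 ≤ Real.log (1+‖τ‖) := log1p_nonneg _ hτ
  have hinv : 0 < s⁻¹ := by positivity
  rw [abs_le]
  constructor
  · have h1 : s ≤ ‖z‖ + ‖τ‖ := norm_sub_le z τ
    have h2 : s/‖z‖ ≤ 1+‖τ‖ := by rw [div_le_iff₀ hzpos]; nlinarith
    have h3 : Real.log (s/‖z‖) ≤ Real.log (1+‖τ‖) :=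
      Real.log_le_log (by positivity) h2
    have h4 : Real.log (s/‖z‖) = -Real.log (‖z‖/s) := by
      rw [Real.log_div hspos.ne' hzpos.ne', Real.log_div hzpos.ne' hspos.ne']; ring
    rw [h4] at h3
    linarith
  · have h1 : ‖z‖/s ≤ (1+‖τ‖)*(1+s⁻¹) := by
      rw [div_le_iff₀ hspos]
      have hz2 : ‖z‖ ≤ s + ‖τ‖ := by
        calc ‖z‖ = ‖(z - τ) + τ‖ := by congr 1; abel
          _ ≤ ‖z-τ‖ + ‖τ‖ := norm_add_le _ _
      have hexp : (1+‖τ‖)*(1+s⁻¹)*s = (1+‖τ‖)*(s+1) := by field_simp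
      rw [hexp]; nlinarith
    have h2 : Real.log (‖z‖/s) ≤ Real.log ((1+‖τ‖)*(1+s⁻¹)) :=
      Real.log_le_log (by positivity) h1
    have h3 : Real.log ((1+‖τ‖)*(1+s⁻¹)) = Real.log (1+‖τ‖) + Real.log (1+s⁻¹) :=
      Real.log_mul (by positivity) (by positivity)
    have h4 : Real.log (1+s⁻¹) ≤ s⁻¹ := log1p_le _ hinv.le
    linarith

lemma abs_log_sub_le (z τ : E2) (h : z - τ ≠ 0) :
    |Real.log ‖z-τ‖| ≤ Real.log (1+‖z‖) + Real.log (1+‖τ‖) + ‖z-τ‖⁻¹ := by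
  have hpos : 0 < ‖z-τ‖ := norm_pos_iff.2 h
  have h1 := abs_log_le ‖z-τ‖ hpos
  have h2 : Real.log (1+‖z-τ‖) ≤ Real.log ((1+‖z‖)*(1+‖τ‖)) := by
    apply Real.log_le_log (by positivity)
    nlinarith [norm_sub_le z τ, norm_nonneg z, norm_nonneg τ]
  rw [Real.log_mul (by positivity) (by positivity)] at h2
  linarith

section Annuli

lemma annuli_cover : ∀ w : E2, w ∈ ball (0:E2) 1 \ {0} →
    ∃ n : ℕ, w ∈ ball (0:E2) ((1/2)^n) \ ball (0:E2) ((1/2)^(n+1)) := by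
  intro w hw
  have hr : 0 < ‖w‖ := by simpa [norm_pos_iff] using hw.2
  have hr1 : ‖w‖ < 1 := by simpa [mem_ball, dist_zero_right] using hw.1
  have hex : ∃ k : ℕ, ((1:ℝ)/2)^(k+1) ≤ ‖w‖ := by
    obtain ⟨k, hk⟩ := exists_pow_lt_of_lt_one hr (by norm_num : (1:ℝ)/2 < 1)
    refine ⟨k, le_of_lt (lt_of_le_of_lt ?_ hk)⟩
    exact pow_le_pow_of_le_one (by norm_num) (by norm_num) (by omega)
  classical
  set n := Nat.find hex with hn
  have h1 : ((1:ℝ)/2)^(n+1) ≤ ‖w‖ := Nat.find_spec hex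
  have h2 : ‖w‖ < ((1:ℝ)/2)^n := by
    rcases Nat.eq_zero_or_pos n with h0 | hpos
    · simpa [h0] using hr1
    · have hmin := Nat.find_min hex (m := n - 1) (by omega)
      push_neg at hmin
      have he : n - 1 + 1 = n := by omega
      rwa [he] at hmin
  refine ⟨n, ?_, ?_⟩
  · simpa [mem_ball, dist_zero_right] using h2
  · simpa [mem_ball, dist_zero_right, not_lt] using h1

lemma inv_norm_integrable : IntegrableOn (fun w : E2 => ‖w‖⁻¹) (ball (0:E2) 1) := by
  have hfr : Module.finrank ℝ E2 = 2 := by simp [finrank_euclideanSpace]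
  constructor
  · exact (measurable_norm.inv).aestronglyMeasurable.restrict
  · rw [hasFiniteIntegral_iff_norm]
    set B := volume (ball (0:E2) 1) with hB
    have hBlt : B < ⊤ := measure_ball_lt_top
    calc ∫⁻ w in ball (0:E2) 1, ENNReal.ofReal ‖(‖w‖⁻¹)‖
        ≤ ∫⁻ w in (⋃ n : ℕ, (ball (0:E2) ((1/2)^n) \ ball (0:E2) ((1/2)^(n+1)))) ∪ {0},
            ENNReal.ofReal ‖(‖w‖⁻¹)‖ := by
          apply lintegral_mono_set
          intro w hw
          by_cases h0 : w = 0
          · exact Or.inr (by simp [h0])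
          · exact Or.inl (Set.mem_iUnion.2 (annuli_cover w ⟨hw, h0⟩))
      _ ≤ (∫⁻ w in (⋃ n : ℕ, (ball (0:E2) ((1/2)^n) \ ball (0:E2) ((1/2)^(n+1)))),
            ENNReal.ofReal ‖(‖w‖⁻¹)‖) + ∫⁻ w in ({0} : Set E2), ENNReal.ofReal ‖(‖w‖⁻¹)‖ :=
          lintegral_union_le _ _ _
      _ ≤ (∑' n : ℕ, ∫⁻ w in (ball (0:E2) ((1/2)^n) \ ball (0:E2) ((1/2)^(n+1))),
            ENNReal.ofReal ‖(‖w‖⁻¹)‖) + 0 := by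
          gcongr
          · exact lintegral_iUnion_le _ _
          · rw [setLIntegral_measure_zero _ _ (measure_singleton 0)]
      _ ≤ (∑' n : ℕ, ENNReal.ofReal (2 * (1/2)^n) * B) + 0 := by
          gcongr with n
          have hstep : ∀ w ∈ (ball (0:E2) ((1/2)^n) \ ball (0:E2) ((1/2)^(n+1))),
              ENNReal.ofReal ‖(‖w‖⁻¹)‖ ≤ ENNReal.ofReal (2^(n+1)) := by
            intro w hw
            have h1 : ((1:ℝ)/2)^(n+1) ≤ ‖w‖ := by
              simpa [mem_ball, dist_zero_right, not_lt] using hw.2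
            have hwpos : (0:ℝ) < ‖w‖ := lt_of_lt_of_le (by positivity) h1
            apply ENNReal.ofReal_le_ofReal
            rw [Real.norm_eq_abs, abs_of_nonneg (by positivity)]
            rw [inv_le_comm₀ hwpos (by positivity)]
            calc ((2:ℝ)^(n+1))⁻¹ = ((1:ℝ)/2)^(n+1) := by rw [one_div, inv_pow]
              _ ≤ ‖w‖ := h1
          calc ∫⁻ w in (ball (0:E2) ((1/2)^n) \ ball (0:E2) ((1/2)^(n+1))),
                ENNReal.ofReal ‖(‖w‖⁻¹)‖
              ≤ ∫⁻ _ in (ball (0:E2) ((1/2)^n) \ ball (0:E2) ((1/2)^(n+1))),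
                ENNReal.ofReal (2^(n+1)) :=
                setLIntegral_mono' (by measurability) hstep
            _ = ENNReal.ofReal (2^(n+1)) *
                volume (ball (0:E2) ((1/2)^n) \ ball (0:E2) ((1/2)^(n+1))) := by
                rw [setLIntegral_const]
            _ ≤ ENNReal.ofReal (2^(n+1)) * (ENNReal.ofReal ((((1:ℝ)/2)^n) ^ 2) * B) := by
                gcongr
                calc volume (ball (0:E2) ((1/2)^n) \ ball (0:E2) ((1/2)^(n+1)))
                    ≤ volume (ball (0:E2) ((1/2)^n)) := measure_mono Set.diff_subset
                  _ = ENNReal.ofReal ((((1:ℝ)/2)^n) ^ 2) * B := by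
                      have h := Measure.addHaar_ball (volume : Measure E2) (0:E2)
                        (r := ((1:ℝ)/2)^n) (by positivity)
                      rwa [hfr] at h
            _ = ENNReal.ofReal (2 * (1/2)^n) * B := by
                rw [← mul_assoc, ← ENNReal.ofReal_mul (by positivity)]
                congr 2
                rw [show (2:ℝ)^(n+1) * ((((1:ℝ)/2)^n) ^ 2) = (((1:ℝ)/2)^n * 2^n) * (2 * (1/2)^n) by ring,
                  show ((1:ℝ)/2)^n * 2^n = 1 by rw [← mul_pow]; norm_num, one_mul]
      _ < ⊤ := by
          rw [add_zero]
          have heq : ∀ n : ℕ, ENNReal.ofReal (2 * (1/2)^n) * B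
              = ENNReal.ofReal 2 * ((ENNReal.ofReal (1/2))^n * B) := by
            intro n
            rw [ENNReal.ofReal_mul (by norm_num), ENNReal.ofReal_pow (by norm_num), mul_assoc]
          rw [tsum_congr heq, ENNReal.tsum_mul_left, ENNReal.tsum_mul_right,
            ENNReal.tsum_geometric]
          refine ENNReal.mul_lt_top (by simp) (ENNReal.mul_lt_top ?_ hBlt)
          rw [ENNReal.inv_lt_top]
          simp [ENNReal.ofReal_lt_one]

end Annuli

lemma F_integrable : Integrable F :=
  inv_norm_integrable.integrable_indicator measurableSet_ball


section Arith

lemma arith_ip {i p Fa : ℝ} (hp : 0 < p) (hp1 : p ≤ 1) (hFa : 0 ≤ Fa) (hi : i ≤ Fa + 1) :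
    i * p ≤ Fa + p := by
  nlinarith [mul_le_mul_of_nonneg_right hi hp.le, mul_nonneg hFa (sub_nonneg.2 hp1)]

lemma arith1 {M p L Fa Fb i : ℝ} (hM : 0 < M) (hp : 0 < p) (hL : 0 ≤ L)
    (hFa : 0 ≤ Fa) (hFb : 0 ≤ Fb) (hi : i * p ≤ Fa + p) :
    (L + i) * (M*p) ≤ M*((1+L)*p) + M*(Fa+Fb) := by
  nlinarith [mul_le_mul_of_nonneg_left hi hM.le,
    mul_nonneg (mul_nonneg hM.le hL) hp.le, mul_nonneg hM.le hFb]

lemma arith2 {M p L Lz Fa Fb j : ℝ} (hM : 0 < M) (hp : 0 < p) (hL : 0 ≤ L)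
    (hLz : 0 ≤ Lz) (hFa : 0 ≤ Fa) (hFb : 0 ≤ Fb) (hj : j * p ≤ Fb + p) :
    (Lz + L + j) * (M*p) ≤ (M*(2+Lz))*((1+L)*p) + M*(Fa+Fb) := by
  nlinarith [mul_le_mul_of_nonneg_left hj hM.le,
    mul_nonneg (mul_nonneg hM.le hL) hp.le,
    mul_nonneg (mul_nonneg (mul_nonneg hM.le hLz) hL) hp.le,
    mul_nonneg (mul_nonneg hM.le hLz) hp.le,
    mul_nonneg hM.le hFa, mul_nonneg hM.le hp.le]

lemma arith3 {M p L Fa Fb i j : ℝ} (hM : 0 < M) (hp : 0 < p) (hL : 0 ≤ L)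
    (hFa : 0 ≤ Fa) (hFb : 0 ≤ Fb) (hi : i * p ≤ Fa + p) (hj : j * p ≤ Fb + p) :
    ((L + i) + (2*L + j)) * (M*p) ≤ (3*M)*((1+L)*p) + M*(Fa+Fb) := by
  nlinarith [mul_le_mul_of_nonneg_left hi hM.le, mul_le_mul_of_nonneg_left hj hM.le,
    mul_nonneg (mul_nonneg hM.le hL) hp.le, mul_nonneg hM.le hp.le]

lemma arith4 {M p L Lz Fa Fb i j : ℝ} (hM : 0 < M) (hp : 0 < p) (hL : 0 ≤ L)
    (hLz0 : 0 ≤ Lz) (hLz1 : Lz ≤ 1) (hFa : 0 ≤ Fa) (hFb : 0 ≤ Fb)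
    (hi : i * p ≤ Fa + p) (hj : j * p ≤ Fb + p) :
    (L + i) * (M*p) + (Lz + L + j) * (M*p) ≤ (4*M)*((1+L)*p) + (2*M)*(Fa+Fb) := by
  nlinarith [mul_le_mul_of_nonneg_left hi hM.le, mul_le_mul_of_nonneg_left hj hM.le,
    mul_nonneg (mul_nonneg hM.le hL) hp.le, mul_nonneg hM.le hp.le,
    mul_le_mul_of_nonneg_left (mul_le_mul_of_nonneg_right hLz1 hp.le) hM.le,
    mul_nonneg hM.le hFa, mul_nonneg hM.le hFb]

end Arith

section WithAlpha

variable {α : ℝ}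

lemma pw_integrable (hα : 0 < α) : Integrable (fun τ : E2 => (1+‖τ‖) ^ (-(2+α))) := by
  have h := integrable_one_add_norm (E := E2) (μ := volume) (r := 2+α)
    (by simp [finrank_euclideanSpace]; linarith)
  simpa using h

lemma logpw_integrable (hα : 0 < α) :
    Integrable (fun τ : E2 => Real.log (1+‖τ‖) * (1+‖τ‖) ^ (-(2+α))) := by
  have hbase : Integrable (fun τ : E2 => (2/α) * (1+‖τ‖) ^ (-(2+α/2))) := by
    have h := integrable_one_add_norm (E := E2) (μ := volume) (r := 2+α/2)
      (by simp [finrank_euclideanSpace]; linarith)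
    exact h.const_mul _
  refine hbase.mono' ?_ (Filter.Eventually.of_forall fun τ => ?_)
  · apply Measurable.aestronglyMeasurable
    apply Measurable.mul
    · exact Real.measurable_log.comp (measurable_const.add measurable_norm)
    · fun_prop
  · have h1 : (0:ℝ) < 1 + ‖τ‖ := by positivity
    have hp : (0:ℝ) < (1+‖τ‖) ^ (-(2+α)) := Real.rpow_pos_of_pos h1 _
    have hL : 0 ≤ Real.log (1+‖τ‖) := log1p_nonneg _ (norm_nonneg τ)
    rw [Real.norm_eq_abs, abs_of_nonneg (by positivity)]
    have hkey : Real.log (1+‖τ‖) ≤ (2/α) * (1+‖τ‖) ^ (α/2) := by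
      have h2 : Real.log ((1+‖τ‖) ^ (α/2)) = (α/2) * Real.log (1+‖τ‖) :=
        Real.log_rpow h1 _
      have h3 : Real.log ((1+‖τ‖) ^ (α/2)) ≤ (1+‖τ‖) ^ (α/2) - 1 :=
        Real.log_le_sub_one_of_pos (Real.rpow_pos_of_pos h1 _)
      have h4 : (α/2) * Real.log (1+‖τ‖) ≤ (1+‖τ‖) ^ (α/2) := by
        rw [← h2]; linarith [Real.rpow_pos_of_pos h1 (α/2)]
      calc Real.log (1+‖τ‖) = (2/α) * ((α/2) * Real.log (1+‖τ‖)) := by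
            field_simp
        _ ≤ (2/α) * (1+‖τ‖) ^ (α/2) := by
            apply mul_le_mul_of_nonneg_left h4 (by positivity)
    calc Real.log (1+‖τ‖) * (1+‖τ‖) ^ (-(2+α))
        ≤ ((2/α) * (1+‖τ‖) ^ (α/2)) * (1+‖τ‖) ^ (-(2+α)) :=
          mul_le_mul_of_nonneg_right hkey hp.le
      _ = (2/α) * (1+‖τ‖) ^ (-(2+α/2)) := by
          rw [mul_assoc, ← Real.rpow_add h1]
          congr 2
          ring

lemma base_integrable (hα : 0 < α) :
    Integrable (fun τ : E2 => (1 + Real.log (1+‖τ‖)) * (1+‖τ‖) ^ (-(2+α))) := by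
  have heq : (fun τ : E2 => (1 + Real.log (1+‖τ‖)) * (1+‖τ‖) ^ (-(2+α)))
      = fun τ => (1+‖τ‖) ^ (-(2+α)) + Real.log (1+‖τ‖) * (1+‖τ‖) ^ (-(2+α)) := by
    funext τ; ring
  rw [heq]
  exact (pw_integrable hα).add (logpw_integrable hα)

/-- The majorant function. -/
noncomputable def Phi (α c₁ c₂ : ℝ) (z : E2) : E2 → ℝ := fun τ =>
  c₁ * ((1 + Real.log (1+‖τ‖)) * (1+‖τ‖) ^ (-(2+α))) + c₂ * (F τ + F (z - τ))

lemma Phi_integrable (hα : 0 < α) (c₁ c₂ : ℝ) (z : E2) : Integrable (Phi α c₁ c₂ z) := by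
  exact ((base_integrable hα).const_mul c₁).add
    ((F_integrable.add (F_integrable.comp_sub_left z)).const_mul c₂)

lemma Phi_integral (hα : 0 < α) (c₁ c₂ : ℝ) (z : E2) :
    ∫ τ, Phi α c₁ c₂ z τ
      = c₁ * (∫ τ : E2, (1 + Real.log (1+‖τ‖)) * (1+‖τ‖) ^ (-(2+α)))
        + c₂ * (2 * ∫ w : E2, F w) := by
  unfold Phi
  have h1 : Integrable (fun τ : E2 => c₁ * ((1 + Real.log (1+‖τ‖)) * (1+‖τ‖) ^ (-(2+α)))) :=
    (base_integrable hα).const_mul c₁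
  have h2 : Integrable (fun τ : E2 => c₂ * (F τ + F (z - τ))) :=
    (F_integrable.add (F_integrable.comp_sub_left z)).const_mul c₂
  have h3 : Integrable (fun τ : E2 => F (z - τ)) := F_integrable.comp_sub_left z
  rw [integral_add h1 h2, integral_const_mul, integral_const_mul,
    integral_add F_integrable h3,
    integral_sub_left_eq_self F volume z]
  ring

end WithAlpha

end Stmt16Aux

open Stmt16Aux

set_option maxHeartbeats 1000000 in
theorem stmt16 (α : ℝ) (hα : 0 < α) :
    ∃ C > 0, ∀ M : ℝ, 0 < M → ∀ f : EuclideanSpace ℝ (Fin 2) → ℝ,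
      Integrable f → Integrable (fun z => (f z)^2) → (∫ z, f z) = 0 →
      (∀ z, |f z| ≤ M * (1 + ‖z‖) ^ (-(2 + α))) →
      ∀ z, Integrable (fun τ => Real.log (‖τ‖ * ‖z‖ / ‖z - τ‖) * f τ) ∧
        |(1 / (2 * Real.pi)) * ∫ τ, Real.log (‖τ‖ * ‖z‖ / ‖z - τ‖) * f τ| ≤ C * M := by
  set I := ∫ τ : E2, (1 + Real.log (1+‖τ‖)) * (1+‖τ‖) ^ (-(2+α)) with hI
  set κ := ∫ w : E2, F w with hκ
  have hI0 : 0 ≤ I := by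
    apply integral_nonneg
    intro τ
    have := log1p_nonneg ‖τ‖ (norm_nonneg τ)
    have : (0:ℝ) ≤ (1+‖τ‖) ^ (-(2+α)) := Real.rpow_nonneg (by positivity) _
    positivity
  have hκ0 : 0 ≤ κ := integral_nonneg F_nonneg
  refine ⟨4*I + 4*κ + 1, by linarith, ?_⟩
  intro M hM f hf hf2 hf0 hfb z
  by_cases hz0 : z = 0
  · subst hz0
    have hzero : (fun τ : E2 => Real.log (‖τ‖ * ‖(0:E2)‖ / ‖(0:E2) - τ‖) * f τ)
        = fun _ => 0 := by
      funext τ; simp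
    constructor
    · rw [hzero]; exact integrable_zero _ _ _
    · rw [hzero]
      simp only [integral_zero, mul_zero, abs_zero]
      nlinarith [hI0, hκ0, hM]
  · have hznorm : (0:ℝ) < ‖z‖ := norm_pos_iff.2 hz0
    have h_ae : ∀ᵐ τ : E2, τ ≠ 0 ∧ z - τ ≠ 0 := by
      have h0 : ∀ᵐ τ : E2, τ ≠ 0 := by
        rw [ae_iff]
        have he : {τ : E2 | ¬ τ ≠ 0} = {0} := by ext τ; simp
        rw [he]; exact measure_singleton 0
      have h1 : ∀ᵐ τ : E2, τ ≠ z := by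
        rw [ae_iff]
        have he : {τ : E2 | ¬ τ ≠ z} = {z} := by ext τ; simp
        rw [he]; exact measure_singleton z
      filter_upwards [h0, h1] with τ a b
      exact ⟨a, sub_ne_zero.2 (Ne.symm b)⟩
    have h_eq : (fun τ : E2 => Real.log (‖τ‖ * ‖z‖ / ‖z - τ‖) * f τ)
        =ᵐ[volume] fun τ => (Real.log ‖τ‖ + Real.log ‖z‖ - Real.log ‖z-τ‖) * f τ := by
      filter_upwards [h_ae] with τ hτ
      obtain ⟨hτ0, hτz⟩ := hτ
      have h1 : ‖τ‖ ≠ 0 := (norm_pos_iff.2 hτ0).ne'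
      have h3 : ‖z-τ‖ ≠ 0 := (norm_pos_iff.2 hτz).ne'
      rw [Real.log_div (mul_ne_zero h1 hznorm.ne') h3, Real.log_mul h1 hznorm.ne']
    -- integrability of the pieces
    have hg1 : Integrable (fun τ : E2 => Real.log ‖τ‖ * f τ) := by
      refine (Phi_integrable hα M M z).mono'
        ((Real.measurable_log.comp measurable_norm).aestronglyMeasurable.mul hf.1) ?_
      filter_upwards [h_ae] with τ hτ
      obtain ⟨hτ0, hτz⟩ := hτ
      have hτpos : (0:ℝ) < ‖τ‖ := norm_pos_iff.2 hτ0
      have hp : (0:ℝ) < (1+‖τ‖) ^ (-(2+α)) := Real.rpow_pos_of_pos (by positivity) _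
      have hp1 : (1+‖τ‖) ^ (-(2+α)) ≤ 1 :=
        Real.rpow_le_one_of_one_le_of_nonpos (by linarith [norm_nonneg τ]) (by linarith)
      have hL : 0 ≤ Real.log (1+‖τ‖) := log1p_nonneg _ (norm_nonneg τ)
      have habs : |f τ| ≤ M * (1+‖τ‖) ^ (-(2+α)) := hfb τ
      have hlog := abs_log_le ‖τ‖ hτpos
      have hFa := F_nonneg τ
      have hFb := F_nonneg (z - τ)
      have hiF := inv_le_F_add_one τ
      rw [Real.norm_eq_abs, abs_mul]
      have step1 : |Real.log ‖τ‖| * |f τ|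
          ≤ (Real.log (1+‖τ‖) + ‖τ‖⁻¹) * (M * (1+‖τ‖) ^ (-(2+α))) :=
        mul_le_mul hlog habs (abs_nonneg _) (by positivity)
      refine le_trans step1 ?_
      unfold Phi
      exact arith1 hM hp hL hFa hFb (arith_ip hp hp1 hFa hiF)
    have hg2 : Integrable (fun τ : E2 => Real.log ‖z-τ‖ * f τ) := by
      refine (Phi_integrable hα (M*(2+Real.log (1+‖z‖))) M z).mono'
        ((Real.measurable_log.comp
          ((measurable_const.sub measurable_id).norm)).aestronglyMeasurable.mul hf.1) ?_
      filter_upwards [h_ae] with τ hτ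
      obtain ⟨hτ0, hτz⟩ := hτ
      have hp : (0:ℝ) < (1+‖τ‖) ^ (-(2+α)) := Real.rpow_pos_of_pos (by positivity) _
      have hp1 : (1+‖τ‖) ^ (-(2+α)) ≤ 1 :=
        Real.rpow_le_one_of_one_le_of_nonpos (by linarith [norm_nonneg τ]) (by linarith)
      have hL : 0 ≤ Real.log (1+‖τ‖) := log1p_nonneg _ (norm_nonneg τ)
      have hLz : 0 ≤ Real.log (1+‖z‖) := log1p_nonneg _ (norm_nonneg z)
      have habs : |f τ| ≤ M * (1+‖τ‖) ^ (-(2+α)) := hfb τ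
      have hlog := abs_log_sub_le z τ hτz
      have hFa := F_nonneg τ
      have hFb := F_nonneg (z - τ)
      have hjF := inv_le_F_add_one (z - τ)
      rw [Real.norm_eq_abs, abs_mul]
      have step1 : |Real.log ‖z-τ‖| * |f τ|
          ≤ (Real.log (1+‖z‖) + Real.log (1+‖τ‖) + ‖z-τ‖⁻¹) * (M * (1+‖τ‖) ^ (-(2+α))) :=
        mul_le_mul hlog habs (abs_nonneg _) (by positivity)
      refine le_trans step1 ?_
      unfold Phi
      exact arith2 hM hp hL hLz hFa hFb (arith_ip hp hp1 hFb hjF)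
    have hg3 : Integrable (fun τ : E2 => Real.log ‖z‖ * f τ) := hf.const_mul _
    have hh : Integrable (fun τ : E2 =>
        (Real.log ‖τ‖ + Real.log ‖z‖ - Real.log ‖z-τ‖) * f τ) := by
      have heq2 : (fun τ : E2 => (Real.log ‖τ‖ + Real.log ‖z‖ - Real.log ‖z-τ‖) * f τ)
          = fun τ => (Real.log ‖τ‖ * f τ + Real.log ‖z‖ * f τ) - Real.log ‖z-τ‖ * f τ := by
        funext τ; ring
      rw [heq2]; exact (hg1.add hg3).sub hg2
    refine ⟨hh.congr h_eq.symm, ?_⟩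
    have hIeq : ∫ τ : E2, Real.log (‖τ‖*‖z‖/‖z-τ‖) * f τ
        = ∫ τ : E2, (Real.log ‖τ‖ + Real.log ‖z‖ - Real.log ‖z-τ‖) * f τ :=
      integral_congr_ae h_eq
    have hmain : |∫ τ : E2, (Real.log ‖τ‖ + Real.log ‖z‖ - Real.log ‖z-τ‖) * f τ|
        ≤ M * (4*I + 4*κ) := by
      by_cases hz1 : 1 ≤ ‖z‖
      · have hb : ∀ᵐ τ : E2, ‖(Real.log ‖τ‖ + Real.log ‖z‖ - Real.log ‖z-τ‖) * f τ‖
            ≤ Phi α (3*M) M z τ := by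
          filter_upwards [h_ae] with τ hτ
          obtain ⟨hτ0, hτz⟩ := hτ
          have hτpos : (0:ℝ) < ‖τ‖ := norm_pos_iff.2 hτ0
          have h3 : ‖z-τ‖ ≠ 0 := (norm_pos_iff.2 hτz).ne'
          have hp : (0:ℝ) < (1+‖τ‖) ^ (-(2+α)) := Real.rpow_pos_of_pos (by positivity) _
          have hp1 : (1+‖τ‖) ^ (-(2+α)) ≤ 1 :=
            Real.rpow_le_one_of_one_le_of_nonpos (by linarith [norm_nonneg τ]) (by linarith)
          have hL : 0 ≤ Real.log (1+‖τ‖) := log1p_nonneg _ (norm_nonneg τ)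
          have habs : |f τ| ≤ M * (1+‖τ‖) ^ (-(2+α)) := hfb τ
          have hFa := F_nonneg τ
          have hFb := F_nonneg (z - τ)
          have hiF := inv_le_F_add_one τ
          have hjF := inv_le_F_add_one (z - τ)
          have hratio : Real.log ‖z‖ - Real.log ‖z-τ‖ = Real.log (‖z‖/‖z-τ‖) :=
            (Real.log_div hznorm.ne' h3).symm
          rw [Real.norm_eq_abs, abs_mul,
            show Real.log ‖τ‖ + Real.log ‖z‖ - Real.log ‖z-τ‖
              = Real.log ‖τ‖ + (Real.log ‖z‖ - Real.log ‖z-τ‖) by ring, hratio]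
          have h5 : |Real.log ‖τ‖ + Real.log (‖z‖/‖z-τ‖)|
              ≤ (Real.log (1+‖τ‖) + ‖τ‖⁻¹) + (2*Real.log (1+‖τ‖) + ‖z-τ‖⁻¹) :=
            le_trans (abs_add_le _ _)
              (add_le_add (abs_log_le _ hτpos) (log_ratio_bound z τ hz1 hτz))
          have step1 : |Real.log ‖τ‖ + Real.log (‖z‖/‖z-τ‖)| * |f τ|
              ≤ ((Real.log (1+‖τ‖) + ‖τ‖⁻¹) + (2*Real.log (1+‖τ‖) + ‖z-τ‖⁻¹))
                * (M * (1+‖τ‖) ^ (-(2+α))) :=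
            mul_le_mul h5 habs (abs_nonneg _) (by positivity)
          refine le_trans step1 ?_
          unfold Phi
          exact arith3 hM hp hL hFa hFb (arith_ip hp hp1 hFa hiF) (arith_ip hp hp1 hFb hjF)
        have hnb := norm_integral_le_of_norm_le (Phi_integrable hα (3*M) M z) hb
        rw [Real.norm_eq_abs] at hnb
        refine le_trans hnb ?_
        rw [Phi_integral hα (3*M) M z]
        nlinarith [hI0, hκ0, hM]
      · push_neg at hz1
        have hLz1 : Real.log (1+‖z‖) ≤ 1 :=
          le_trans (log1p_le ‖z‖ (norm_nonneg z)) hz1.le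
        have hsplit : ∫ τ : E2, (Real.log ‖τ‖ + Real.log ‖z‖ - Real.log ‖z-τ‖) * f τ
            = ∫ τ : E2, (Real.log ‖τ‖ * f τ - Real.log ‖z-τ‖ * f τ) := by
          have heq3 : (fun τ : E2 => (Real.log ‖τ‖ + Real.log ‖z‖ - Real.log ‖z-τ‖) * f τ)
              = fun τ => (Real.log ‖τ‖ * f τ - Real.log ‖z-τ‖ * f τ)
                + Real.log ‖z‖ * f τ := by
            funext τ; ring
          have hsub : Integrable (fun τ : E2 => Real.log ‖τ‖ * f τ - Real.log ‖z-τ‖ * f τ) :=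
            hg1.sub hg2
          rw [heq3, integral_add hsub hg3, integral_const_mul, hf0, mul_zero, add_zero]
        rw [hsplit]
        have hb : ∀ᵐ τ : E2, ‖Real.log ‖τ‖ * f τ - Real.log ‖z-τ‖ * f τ‖
            ≤ Phi α (4*M) (2*M) z τ := by
          filter_upwards [h_ae] with τ hτ
          obtain ⟨hτ0, hτz⟩ := hτ
          have hτpos : (0:ℝ) < ‖τ‖ := norm_pos_iff.2 hτ0
          have hp : (0:ℝ) < (1+‖τ‖) ^ (-(2+α)) := Real.rpow_pos_of_pos (by positivity) _
          have hp1 : (1+‖τ‖) ^ (-(2+α)) ≤ 1 :=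
            Real.rpow_le_one_of_one_le_of_nonpos (by linarith [norm_nonneg τ]) (by linarith)
          have hL : 0 ≤ Real.log (1+‖τ‖) := log1p_nonneg _ (norm_nonneg τ)
          have habs : |f τ| ≤ M * (1+‖τ‖) ^ (-(2+α)) := hfb τ
          have hFa := F_nonneg τ
          have hFb := F_nonneg (z - τ)
          have hiF := inv_le_F_add_one τ
          have hjF := inv_le_F_add_one (z - τ)
          have h6 : ‖Real.log ‖τ‖ * f τ - Real.log ‖z-τ‖ * f τ‖
              ≤ |Real.log ‖τ‖| * |f τ| + |Real.log ‖z-τ‖| * |f τ| := by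
            rw [Real.norm_eq_abs]
            calc |Real.log ‖τ‖ * f τ - Real.log ‖z-τ‖ * f τ|
                ≤ |Real.log ‖τ‖ * f τ| + |Real.log ‖z-τ‖ * f τ| := abs_sub _ _
              _ = |Real.log ‖τ‖| * |f τ| + |Real.log ‖z-τ‖| * |f τ| := by
                  rw [abs_mul, abs_mul]
          have step1 : |Real.log ‖τ‖| * |f τ|
              ≤ (Real.log (1+‖τ‖) + ‖τ‖⁻¹) * (M * (1+‖τ‖) ^ (-(2+α))) :=
            mul_le_mul (abs_log_le _ hτpos) habs (abs_nonneg _) (by positivity)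
          have step2 : |Real.log ‖z-τ‖| * |f τ|
              ≤ (Real.log (1+‖z‖) + Real.log (1+‖τ‖) + ‖z-τ‖⁻¹)
                * (M * (1+‖τ‖) ^ (-(2+α))) :=
            mul_le_mul (abs_log_sub_le z τ hτz) habs (abs_nonneg _)
              (by have := log1p_nonneg ‖z‖ (norm_nonneg z); positivity)
          refine le_trans h6 (le_trans (add_le_add step1 step2) ?_)
          unfold Phi
          exact arith4 hM hp hL (log1p_nonneg _ (norm_nonneg z)) hLz1 hFa hFb
            (arith_ip hp hp1 hFa hiF) (arith_ip hp hp1 hFb hjF)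
        have hnb := norm_integral_le_of_norm_le (Phi_integrable hα (4*M) (2*M) z) hb
        rw [Real.norm_eq_abs] at hnb
        refine le_trans hnb ?_
        rw [Phi_integral hα (4*M) (2*M) z]
        nlinarith [hI0, hκ0, hM]
    have hpi : (0:ℝ) < 2*Real.pi := by linarith [Real.pi_pos]
    have hfrac : (0:ℝ) < 1/(2*Real.pi) := one_div_pos.2 hpi
    have h2pi : (1:ℝ)/(2*Real.pi) ≤ 1 := by
      rw [div_le_one hpi]
      nlinarith [Real.pi_gt_three]
    rw [abs_mul, abs_of_pos hfrac]
    calc (1/(2*Real.pi)) * |∫ τ : E2, Real.log (‖τ‖*‖z‖/‖z-τ‖) * f τ|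
        ≤ 1 * |∫ τ : E2, Real.log (‖τ‖*‖z‖/‖z-τ‖) * f τ| :=
          mul_le_mul_of_nonneg_right h2pi (abs_nonneg _)
      _ = |∫ τ : E2, Real.log (‖τ‖*‖z‖/‖z-τ‖) * f τ| := one_mul _
      _ ≤ M * (4*I + 4*κ) := by rw [hIeq]; exact hmain
      _ ≤ (4*I + 4*κ + 1) * M := by nlinarith [hI0, hκ0, hM]
end

section
/- Suppose ψ₁ : ℝ² → ℝ is a bounded C² function satisfying |Δψ₁ + (1−3S_d(r)²)ψ₁ − (d²/r²)ψ₁| ≤ C (log r)/r² for r = |z| > 1, where S_d(r) → 1 as r → ∞ and 0 ≤ S_d ≤ 1, and |ψ₁(z)| ≤ C log(1+|z|). Then there is C′ with |ψ₁(z)| ≤ C′/(1+|z|) for all z ∈ ℝ². -/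
noncomputable def lap2 (f : EuclideanSpace ℝ (Fin 2) → ℝ) (x : EuclideanSpace ℝ (Fin 2)) : ℝ :=
  ∑ i : Fin 2, fderiv ℝ (fun y => fderiv ℝ f y (EuclideanSpace.single i 1)) x (EuclideanSpace.single i 1)

/-!
Beyond a radius `R₀ ≥ 2` where `1 - 3 S_d² - d²/r² ≤ -1`, the equation gives `Δψ ≥ ψ - C log r / r²`
wherever `ψ > 0`. The barrier `w = A/r + ε r` has `Δw = A/r³ + ε/r ≤ w - C log r / r²` for `r ≥ 2`
once `4C ≤ 3A`, so `w - ψ` cannot attain a negative minimum inside an annulus `R₀ ≤ r ≤ R`. On the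
inner circle `ψ ≤ w` by the choice of `A`, on the outer circle by the logarithmic growth of `ψ` once
`R` is large. Hence `ψ ≤ A/r + ε r` for every `ε > 0`, i.e. `ψ ≤ A/r`; the same argument applies to
`-ψ`.
-/

open Filter Set Real Topology

local notation "E2" => EuclideanSpace ℝ (Fin 2)

theorem ContDiffAt.differentiableAt_fderiv_apply {E : Type*} [NormedAddCommGroup E]
    [NormedSpace ℝ E] {f : E → ℝ} {x : E} (hf : ContDiffAt ℝ 2 f x) (u : E) :
    DifferentiableAt ℝ (fun y => fderiv ℝ f y u) x :=
  ((hf.fderiv_right (m := 1) le_rfl).clm_apply contDiffAt_const).differentiableAt one_ne_zero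

theorem IsLocalMin.nonneg_of_hasDerivAt_deriv {g g' : ℝ → ℝ} {a m : ℝ} (hmin : IsLocalMin g a)
    (hg : ∀ᶠ t in 𝓝 a, HasDerivAt g (g' t) t) (hg' : HasDerivAt g' m a) : 0 ≤ m := by
  -- If `m < 0`, the second derivative test makes `a` a local maximum too, so `g` is locally
  -- constant near `a` and `m = 0`.
  by_contra! hm
  have hderiv : deriv g =ᶠ[𝓝 a] g' := hg.mono fun t ht => ht.deriv
  have hmax : IsLocalMax g a :=
    isLocalMax_of_deriv_deriv_neg (by rwa [hderiv.deriv_eq, hg'.deriv])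
      (by rw [hg.self_of_nhds.deriv, ← hmin.deriv_eq_zero, hg.self_of_nhds.deriv])
      hg.self_of_nhds.continuousAt
  have hconst : g =ᶠ[𝓝 a] fun _ => g a := (hmin.and hmax).mono fun t h => le_antisymm h.2 h.1
  have hderiv0 : deriv g =ᶠ[𝓝 a] fun _ => 0 :=
    hconst.eventuallyEq_nhds.mono fun t ht => ht.deriv_eq.trans (deriv_const t _)
  have : m = 0 := by rw [← hg'.deriv, ← hderiv.deriv_eq, hderiv0.deriv_eq, deriv_const]
  exact hm.ne this

theorem IsLocalMin.fderiv_fderiv_apply_nonneg {E : Type*} [NormedAddCommGroup E] [NormedSpace ℝ E]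
    {f : E → ℝ} {x : E} (hmin : IsLocalMin f x) (hf : ContDiffAt ℝ 2 f x) (u : E) :
    0 ≤ fderiv ℝ (fun y => fderiv ℝ f y u) x u := by
  set L : ℝ → E := fun t => x + t • u
  have hL : ∀ t, HasDerivAt L u t := fun t =>
    (((hasDerivAt_id t).smul_const u).const_add x).congr_deriv (one_smul ℝ u)
  have hL0x : x = L 0 := by simp [L]
  have hL0 : Tendsto L (𝓝 0) (𝓝 x) := by
    simpa [L] using (hL 0).continuousAt.tendsto
  have hdf : ∀ᶠ y in 𝓝 x, DifferentiableAt ℝ f y :=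
    (hf.eventually (by simp)).mono fun y hy => hy.differentiableAt (by norm_num)
  refine IsLocalMin.nonneg_of_hasDerivAt_deriv (g := f ∘ L) (a := 0)
    (g' := fun t => fderiv ℝ f (L t) u) ?_ ?_ ?_
  · simpa [IsLocalMin, IsMinFilter, L] using hL0.eventually hmin
  · filter_upwards [hL0.eventually hdf] with t ht using ht.hasFDerivAt.comp_hasDerivAt t (hL t)
  · exact (hf.differentiableAt_fderiv_apply u).hasFDerivAt.comp_hasDerivAt_of_eq 0 (hL 0) hL0x

theorem lap2_neg (f : E2 → ℝ) (x : E2) : lap2 (fun y => -f y) x = -lap2 f x := by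
  simp only [lap2, fderiv_fun_neg, neg_apply, Finset.sum_neg_distrib]

theorem lap2_sub {f g : E2 → ℝ} {x : E2} (hf : ContDiffAt ℝ 2 f x) (hg : ContDiffAt ℝ 2 g x) :
    lap2 (fun y => f y - g y) x = lap2 f x - lap2 g x := by
  rw [lap2, lap2, lap2, ← Finset.sum_sub_distrib]
  refine Finset.sum_congr rfl fun i _ => ?_
  set u : E2 := EuclideanSpace.single i 1
  have hsub : (fun y => fderiv ℝ (fun z => f z - g z) y u) =ᶠ[𝓝 x]
      fun y => fderiv ℝ f y u - fderiv ℝ g y u := by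
    filter_upwards [hf.eventually (by simp), hg.eventually (by simp)] with y hfy hgy
    rw [fderiv_fun_sub (hfy.differentiableAt two_ne_zero) (hgy.differentiableAt two_ne_zero)]
    rfl
  rw [hsub.fderiv_eq, fderiv_fun_sub (hf.differentiableAt_fderiv_apply u)
    (hg.differentiableAt_fderiv_apply u)]
  rfl

theorem lap2_comp_norm_sq {φ φ' φ'' : ℝ → ℝ} (hφ : ∀ s, 0 < s → HasDerivAt φ (φ' s) s)
    (hφ' : ∀ s, 0 < s → HasDerivAt φ' (φ'' s) s) {x : E2} (hx : x ≠ 0) :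
    lap2 (fun z => φ (‖z‖ ^ 2)) x = 4 * ‖x‖ ^ 2 * φ'' (‖x‖ ^ 2) + 4 * φ' (‖x‖ ^ 2) := by
  have hpos : ∀ {y : E2}, y ≠ 0 → 0 < ‖y‖ ^ 2 := fun hy => by positivity
  have hfirst : ∀ i : Fin 2,
      (fun y => fderiv ℝ (fun z => φ (‖z‖ ^ 2)) y (EuclideanSpace.single i 1)) =ᶠ[𝓝 x]
        fun y => φ' (‖y‖ ^ 2) * (2 * y i) := fun i => by
    filter_upwards [isOpen_ne.mem_nhds hx] with y hy
    have h : HasFDerivAt (fun z : E2 => φ (‖z‖ ^ 2)) (φ' (‖y‖ ^ 2) • 2 • innerSL ℝ y) y :=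
      (hφ _ (hpos hy)).comp_hasFDerivAt y (hasStrictFDerivAt_norm_sq y).hasFDerivAt
    simp [h.fderiv, EuclideanSpace.inner_single_right]
  have hsecond : ∀ i : Fin 2,
      fderiv ℝ (fun y => φ' (‖y‖ ^ 2) * (2 * y i)) x (EuclideanSpace.single i 1) =
        4 * φ'' (‖x‖ ^ 2) * x i ^ 2 + 2 * φ' (‖x‖ ^ 2) := fun i => by
    have h : HasFDerivAt (fun y : E2 => φ' (‖y‖ ^ 2) * (2 * y i)) _ x :=
      ((hφ' _ (hpos hx)).comp_hasFDerivAt x (hasStrictFDerivAt_norm_sq x).hasFDerivAt).mul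
        ((EuclideanSpace.proj i : E2 →L[ℝ] ℝ).hasFDerivAt.const_mul 2)
    simp [h.fderiv, EuclideanSpace.inner_single_right]
    ring
  rw [lap2, Fin.sum_univ_two, (hfirst 0).fderiv_eq, (hfirst 1).fderiv_eq, hsecond, hsecond,
    EuclideanSpace.real_norm_sq_eq, Fin.sum_univ_two]
  ring

noncomputable def barrier (A ε : ℝ) (z : E2) : ℝ := A / ‖z‖ + ε * ‖z‖

theorem contDiffAt_barrier (A ε : ℝ) {x : E2} (hx : x ≠ 0) : ContDiffAt ℝ 2 (barrier A ε) x :=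
  (contDiffAt_const.div (contDiffAt_norm ℝ hx) (norm_ne_zero_iff.mpr hx)).add
    (contDiffAt_const.mul (contDiffAt_norm ℝ hx))

theorem barrier_eq_comp_norm_sq (A ε : ℝ) :
    barrier A ε = fun z => A * (‖z‖ ^ 2) ^ (-1 / 2 : ℝ) + ε * (‖z‖ ^ 2) ^ (1 / 2 : ℝ) := by
  ext z
  simp [barrier, ← Real.rpow_natCast_mul (norm_nonneg z), Real.rpow_neg_one, div_eq_mul_inv]

theorem lap2_barrier (A ε : ℝ) {x : E2} (hx : x ≠ 0) :
    lap2 (barrier A ε) x = A / ‖x‖ ^ 3 + ε / ‖x‖ := by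
  have hd : ∀ (p : ℝ) {s : ℝ}, 0 < s → HasDerivAt (fun s => s ^ p) (p * s ^ (p - 1)) s :=
    fun p s hs => Real.hasDerivAt_rpow_const (Or.inl hs.ne')
  rw [barrier_eq_comp_norm_sq, lap2_comp_norm_sq
    (φ := fun s => A * s ^ (-1 / 2 : ℝ) + ε * s ^ (1 / 2 : ℝ))
    (φ' := fun s => A * (-1 / 2 * s ^ (-3 / 2 : ℝ)) + ε * (1 / 2 * s ^ (-1 / 2 : ℝ)))
    (φ'' := fun s =>
      A * (-1 / 2 * (-3 / 2 * s ^ (-5 / 2 : ℝ))) + ε * (1 / 2 * (-1 / 2 * s ^ (-3 / 2 : ℝ))))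
    (fun s hs => (((hd (-1 / 2) hs).const_mul A).add ((hd (1 / 2) hs).const_mul ε)).congr_deriv
      (by norm_num))
    (fun s hs => ((((hd (-3 / 2) hs).const_mul (-1 / 2)).const_mul A).add
      (((hd (-1 / 2) hs).const_mul (1 / 2)).const_mul ε)).congr_deriv (by norm_num)) hx]
  have hr : ‖x‖ ≠ 0 := norm_ne_zero_iff.mpr hx
  simp only [← Real.rpow_natCast_mul (norm_nonneg x)]
  norm_num [Real.rpow_neg (norm_nonneg x)]
  field_simp
  ring

theorem IsLocalMin.lap2_nonneg {f : E2 → ℝ} {x : E2} (hmin : IsLocalMin f x)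
    (hf : ContDiffAt ℝ 2 f x) : 0 ≤ lap2 f x :=
  Finset.sum_nonneg fun _ _ => hmin.fderiv_fderiv_apply_nonneg hf _

theorem le_on_of_lap2_lt {K U : Set E2} (hK : IsCompact K) (hU : IsOpen U) (hUK : U ⊆ K)
    {w ψ : E2 → ℝ} (hw : ∀ z ∈ K, ContDiffAt ℝ 2 w z) (hψ : ∀ z ∈ K, ContDiffAt ℝ 2 ψ z)
    (hbdry : ∀ z ∈ K \ U, ψ z ≤ w z) (hlap : ∀ z ∈ U, w z < ψ z → lap2 w z < lap2 ψ z) :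
    ∀ z ∈ K, ψ z ≤ w z := by
  intro z hz
  have hcont : ContinuousOn (fun y => w y - ψ y) K := fun y hy =>
    ((hw y hy).continuousAt.sub (hψ y hy).continuousAt).continuousWithinAt
  obtain ⟨x, hxK, hmin⟩ := hK.exists_isMinOn ⟨z, hz⟩ hcont
  suffices ψ x ≤ w x by linarith [isMinOn_iff.1 hmin z hz]
  by_contra! hlt
  have hxU : x ∈ U := by_contra fun hxU => hlt.not_ge (hbdry x ⟨hxK, hxU⟩)
  have hlocal : IsLocalMin (fun y => w y - ψ y) x :=
    hmin.isLocalMin (mem_of_superset (hU.mem_nhds hxU) hUK)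
  have := hlocal.lap2_nonneg ((hw x hxK).sub (hψ x hxK))
  rw [lap2_sub (hw x hxK) (hψ x hxK)] at this
  linarith [hlap x hxU hlt]

theorem lap2_barrier_le {A ε C : ℝ} {x : E2} (hx : 2 ≤ ‖x‖) (hε : 0 ≤ ε) (hC : 0 ≤ C)
    (hA : 4 * C ≤ 3 * A) : lap2 (barrier A ε) x ≤ barrier A ε x - C * log ‖x‖ / ‖x‖ ^ 2 := by
  set r := ‖x‖
  have hr : 0 < r := by linarith
  rw [lap2_barrier A ε (norm_pos_iff.mp hr), barrier]
  have hr4 : 4 ≤ r ^ 2 := by nlinarith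
  have h1 : A / r ^ 3 ≤ A / (4 * r) :=
    div_le_div_of_nonneg_left (by linarith) (by positivity) (by nlinarith)
  have h2 : C * log r / r ^ 2 ≤ C / r := by
    rw [div_le_div_iff₀ (by positivity) hr]
    nlinarith [mul_le_mul_of_nonneg_left (log_le_sub_one_of_pos hr) hC]
  have h3 : ε / r ≤ ε * r := by
    rw [div_le_iff₀ hr]
    nlinarith
  have h4 : A / (4 * r) + C / r ≤ A / r := by
    rw [div_add_div _ _ (by positivity) hr.ne', div_le_div_iff₀ (by positivity) hr]
    nlinarith
  linarith

theorem eventually_mul_log_one_add_le (C : ℝ) {ε : ℝ} (hε : 0 < ε) :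
    ∀ᶠ R in atTop, C * log (1 + R) ≤ ε * R := by
  have hlin : (fun R : ℝ => 1 + R) =O[atTop] id :=
    (Asymptotics.isLittleO_const_id_atTop (1 : ℝ)).isBigO.add (Asymptotics.isBigO_refl _ _)
  have hlog : (fun R => C * log (1 + R)) =o[atTop] id :=
    ((isLittleO_log_id_atTop.comp_tendsto
      (tendsto_atTop_add_const_left atTop 1 tendsto_id)).trans_isBigO hlin).const_mul_left C
  filter_upwards [hlog.bound hε, eventually_ge_atTop 0] with R hR hR0
  simpa [abs_of_nonneg hR0] using (le_abs_self _).trans hR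

theorem le_div_norm_of_sub_le_lap2 {ψ : E2 → ℝ} (hψ : ContDiff ℝ 2 ψ) {C R₀ A : ℝ} (hC : 0 ≤ C)
    (hR₀ : 2 ≤ R₀) (hA : 4 * C ≤ 3 * A)
    (hgrowth : ∀ ε > 0, ∀ᶠ R in atTop, ∀ z : E2, ‖z‖ = R → ψ z ≤ ε * R)
    (hinner : ∀ z : E2, ‖z‖ = R₀ → ψ z ≤ A / R₀)
    (hsuper : ∀ z : E2, R₀ < ‖z‖ → 0 < ψ z → ψ z - C * log ‖z‖ / ‖z‖ ^ 2 ≤ lap2 ψ z) :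
    ∀ z : E2, R₀ ≤ ‖z‖ → ψ z ≤ A / ‖z‖ := by
  intro z hz
  have hz0 : 0 < ‖z‖ := by linarith
  have hA0 : 0 ≤ A := by linarith
  refine le_of_forall_pos_le_add fun δ hδ => ?_
  set ε := δ / ‖z‖
  have hε : 0 < ε := by positivity
  obtain ⟨R, hR, hzR⟩ := ((hgrowth ε hε).and (eventually_ge_atTop ‖z‖)).exists
  have hR₀R : R₀ ≤ R := hz.trans hzR
  have hne : ∀ y : E2, R₀ ≤ ‖y‖ → y ≠ 0 := fun y hy => norm_pos_iff.mp (by linarith)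
  have hcomp : ψ z ≤ barrier A ε z := by
    refine le_on_of_lap2_lt (K := norm ⁻¹' Icc R₀ R) (U := norm ⁻¹' Ioo R₀ R)
      ((isCompact_closedBall (0 : E2) R).of_isClosed_subset
        (isClosed_Icc.preimage continuous_norm) fun y hy => mem_closedBall_zero_iff.2 hy.2)
      (isOpen_Ioo.preimage continuous_norm) (preimage_mono Ioo_subset_Icc_self)
      (fun y hy => contDiffAt_barrier A ε (hne y hy.1)) (fun y _ => hψ.contDiffAt)
      ?_ ?_ z ⟨hz, hzR⟩
    · rintro y ⟨hyK, hyU⟩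
      have hy : ‖y‖ ∈ Icc R₀ R \ Ioo R₀ R := ⟨hyK, hyU⟩
      rw [Icc_sdiff_Ioo_same hR₀R, mem_insert_iff, mem_singleton_iff] at hy
      rcases hy with hy | hy <;> rw [barrier, hy]
      · linarith [hinner y hy, mul_nonneg hε.le (by linarith : 0 ≤ R₀)]
      · linarith [hR y hy, div_nonneg hA0 (by linarith : 0 ≤ R)]
    · rintro y ⟨hy₀, hyR⟩ hlt
      have hw : 0 < barrier A ε y := by
        have : 0 < ‖y‖ := by linarith
        unfold barrier; positivity
      calc lap2 (barrier A ε) y ≤ barrier A ε y - C * log ‖y‖ / ‖y‖ ^ 2 :=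
            lap2_barrier_le (by linarith) hε.le hC hA
        _ < ψ y - C * log ‖y‖ / ‖y‖ ^ 2 := by linarith
        _ ≤ lap2 ψ y := hsuper y hy₀ (hw.trans hlt)
  calc ψ z ≤ barrier A ε z := hcomp
    _ = A / ‖z‖ + δ := by simp only [barrier, ε, div_mul_cancel₀ δ hz0.ne']

theorem exists_abs_le_div_one_add_norm {E : Type*} [SeminormedAddCommGroup E] {f : E → ℝ}
    {R₀ A B : ℝ} (hR₀ : 1 ≤ R₀) (hA : 0 ≤ A) (hnear : ∀ z, ‖z‖ ≤ R₀ → |f z| ≤ B)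
    (hfar : ∀ z, R₀ ≤ ‖z‖ → |f z| ≤ A / ‖z‖) : ∃ C' > 0, ∀ z, |f z| ≤ C' / (1 + ‖z‖) := by
  have hB : 0 ≤ B := (abs_nonneg _).trans (hnear 0 (by simp; linarith))
  refine ⟨(1 + R₀) * B + 2 * A + 1, by positivity, fun z => ?_⟩
  have hz : 0 < 1 + ‖z‖ := by positivity
  rw [le_div_iff₀ hz]
  rcases le_total ‖z‖ R₀ with h | h
  · nlinarith [hnear z h, abs_nonneg (f z)]
  · have hfz := hfar z h
    rw [le_div_iff₀ (by linarith)] at hfz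
    nlinarith [abs_nonneg (f z)]

theorem sub_le_lap2_of_abs_le {ψ : E2 → ℝ} {z : E2} {s q e : ℝ} (hs : 2 ≤ 3 * s ^ 2) (hq : 0 ≤ q)
    (h : |lap2 ψ z + (1 - 3 * s ^ 2) * ψ z - q * ψ z| ≤ e) :
    (0 < ψ z → ψ z - e ≤ lap2 ψ z) ∧ (0 < -ψ z → -ψ z - e ≤ lap2 (fun y => -ψ y) z) := by
  rw [lap2_neg]
  obtain ⟨h₁, h₂⟩ := abs_le.mp h
  constructor <;> intro hψ <;>
    nlinarith [mul_nonneg (sub_nonneg.2 hs) hψ.le, mul_nonneg hq hψ.le]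

theorem stmt17_general (d : ℤ) (Sd : ℝ → ℝ)
    (hSlim : Filter.Tendsto Sd Filter.atTop (nhds 1))
    (ψ : EuclideanSpace ℝ (Fin 2) → ℝ) (hsm : ContDiff ℝ 2 ψ)
    (C : ℝ) (hC : 0 < C)
    (hlog : ∀ z, |ψ z| ≤ C * Real.log (1 + ‖z‖))
    (hpde : ∀ z : EuclideanSpace ℝ (Fin 2), 1 < ‖z‖ →
      |lap2 ψ z + (1 - 3 * (Sd ‖z‖)^2) * ψ z - ((d : ℝ)^2 / ‖z‖^2) * ψ z| ≤
        C * Real.log ‖z‖ / ‖z‖^2) :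
    ∃ C' > 0, ∀ z, |ψ z| ≤ C' / (1 + ‖z‖) := by
  obtain ⟨R₀, hR₀, hS⟩ : ∃ R₀ : ℝ, 2 ≤ R₀ ∧ ∀ r, R₀ ≤ r → 2 ≤ 3 * Sd r ^ 2 := by
    obtain ⟨R, hR⟩ := eventually_atTop.mp
      ((hSlim.pow 2).eventually (eventually_ge_nhds (by norm_num : (2 / 3 : ℝ) < 1 ^ 2)))
    exact ⟨max R 2, le_max_right _ _, fun r hr => by linarith [hR r ((le_max_left _ _).trans hr)]⟩
  set B := C * log (1 + R₀)
  set A := R₀ * B + 2 * C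
  have hB : 0 ≤ B := mul_nonneg hC.le (log_nonneg (by linarith))
  have hA : 4 * C ≤ 3 * A := by nlinarith
  have hnear : ∀ z : E2, ‖z‖ ≤ R₀ → |ψ z| ≤ B := fun z hz =>
    (hlog z).trans (show _ ≤ C * log (1 + R₀) by gcongr)
  have hinner : ∀ z : E2, ‖z‖ = R₀ → |ψ z| ≤ A / R₀ := fun z hz => by
    rw [le_div_iff₀ (by linarith)]
    nlinarith [hnear z hz.le]
  have hgrowth : ∀ ε > 0, ∀ᶠ R in atTop, ∀ z : E2, ‖z‖ = R → |ψ z| ≤ ε * R := fun ε hε =>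
    (eventually_mul_log_one_add_le C hε).mono fun R hR z hz => (hlog z).trans (hz ▸ hR)
  have hsuper := fun z (hz : R₀ < ‖z‖) =>
    sub_le_lap2_of_abs_le (hS _ hz.le) (by positivity) (hpde z (by linarith))
  have hup := le_div_norm_of_sub_le_lap2 hsm hC.le hR₀ hA
    (fun ε hε => (hgrowth ε hε).mono fun R hR z hz => (le_abs_self _).trans (hR z hz))
    (fun z hz => (le_abs_self _).trans (hinner z hz)) fun z hz => (hsuper z hz).1
  have hdown := le_div_norm_of_sub_le_lap2 hsm.neg hC.le hR₀ hA
    (fun ε hε => (hgrowth ε hε).mono fun R hR z hz => (neg_le_abs _).trans (hR z hz))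
    (fun z hz => (neg_le_abs _).trans (hinner z hz)) fun z hz => (hsuper z hz).2
  exact exists_abs_le_div_one_add_norm (by linarith) (by positivity) hnear
    fun z hz => abs_le.mpr ⟨by linarith [hdown z hz], hup z hz⟩

theorem stmt17 (d : ℤ) (Sd : ℝ → ℝ) (hSd : ∀ r, 0 ≤ Sd r ∧ Sd r ≤ 1)
    (hSlim : Filter.Tendsto Sd Filter.atTop (nhds 1))
    (ψ : EuclideanSpace ℝ (Fin 2) → ℝ) (hsm : ContDiff ℝ 2 ψ)
    (B : ℝ) (hbdd : ∀ z, |ψ z| ≤ B)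
    (C : ℝ) (hC : 0 < C)
    (hlog : ∀ z, |ψ z| ≤ C * Real.log (1 + ‖z‖))
    (hpde : ∀ z : EuclideanSpace ℝ (Fin 2), 1 < ‖z‖ →
      |lap2 ψ z + (1 - 3 * (Sd ‖z‖)^2) * ψ z - ((d : ℝ)^2 / ‖z‖^2) * ψ z| ≤
        C * Real.log ‖z‖ / ‖z‖^2) :
    ∃ C' > 0, ∀ z, |ψ z| ≤ C' / (1 + ‖z‖) :=
  stmt17_general d Sd hSlim ψ hsm C hC hlog hpde
end

section
/- Let w be positive, radially decreasing and satisfy w(r) = A₀ r^{−1/2} e^{−r}(1+O(1/r)). Then for ξ ∈ ℝ² with |ξ| = L large, ∫_{ℝ²} w(|z|)² w′(|z|) w(|z+ξ|) (z₁/|z|) dz = −c₀ w(L)(1+o(1)) as L → ∞, where c₀ > 0 is a constant depending only on w, and ξ = (−L, 0). -/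
/-!
Divide by `w L`. Since `L - ‖z - L e₁‖ → z₁` and `w r ≈ A₀ r^{-1/2} e^{-r}`, the ratio
`w ‖z - L e₁‖ / w L` tends to `e^{z₁}`, so the integrand tends to `w² w'(|z|) e^{z₁} z₁ / |z|`.
Dominated convergence applies: `|w|, |w'| ≤ B e^{-r} / √(1+r)` on `[0, ∞)`,
`w L ≥ (A₀/2) e^{-L} / √(1+L)` for large `L`, and `|z - L e₁| ≥ L - |z|`, which bounds the
quotient by a multiple of `e^{-|z|}`. The limit is negative: averaging over `z₁ ↦ -z₁` turns
`e^{z₁} z₁` into `z₁ sinh z₁ ≥ 0`, while `w² w' ≤ 0`, with strict inequality for large `|z|`.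
-/

open MeasureTheory Filter Topology Real
open scoped RealInnerProductSpace

/-- Comparable to `r ^ (-1/2) * exp (-r)` at infinity, but finite at `0`, so that a single bound
`|f r| ≤ B * expWeight r` can hold on all of `[0, ∞)`. -/
noncomputable def expWeight (r : ℝ) : ℝ := exp (-r) / √(1 + r)

@[simp] lemma expWeight_zero : expWeight 0 = 1 := by simp [expWeight]

lemma expWeight_pos {r : ℝ} (hr : 0 ≤ r) : 0 < expWeight r := by
  unfold expWeight; positivity

lemma expWeight_le_exp_neg {r : ℝ} (hr : 0 ≤ r) : expWeight r ≤ exp (-r) :=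
  div_le_self (exp_pos _).le (one_le_sqrt.2 (by linarith))

lemma continuousOn_expWeight : ContinuousOn expWeight (Set.Ici 0) :=
  ContinuousOn.div (by fun_prop) (by fun_prop) fun r hr =>
    (sqrt_pos.2 (by linarith [Set.mem_Ici.1 hr])).ne'

lemma expWeight_le_exp_mul {ρ r L : ℝ} (hρ : 0 ≤ ρ) (hr : 0 ≤ r) (hL : 0 ≤ L) (h : L ≤ ρ + r) :
    expWeight ρ ≤ exp (2 * r) * expWeight L := by
  have hexp : 1 + r ≤ exp r ^ 2 := by nlinarith [add_one_le_exp r, one_le_exp hr]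
  have hsqrt : √(1 + L) ≤ √(1 + ρ) * exp r := by
    rw [← sqrt_sq (exp_pos r).le, ← sqrt_mul (by linarith)]
    exact sqrt_le_sqrt (by nlinarith)
  unfold expWeight
  rw [mul_div_assoc', div_le_div_iff₀ (sqrt_pos.2 (by linarith)) (sqrt_pos.2 (by linarith))]
  calc exp (-ρ) * √(1 + L) ≤ exp (r - L) * (√(1 + ρ) * exp r) :=
        mul_le_mul (exp_le_exp.2 (by linarith)) hsqrt (sqrt_nonneg _) (exp_pos _).le
    _ = exp (r - L + r) * √(1 + ρ) := by rw [exp_add]; ring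
    _ = exp (2 * r) * exp (-L) * √(1 + ρ) := by rw [← exp_add]; ring_nf

lemma tendsto_div_expWeight_of_abs_sub_le {f : ℝ → ℝ} {a C : ℝ}
    (h : ∀ r ≥ 1, |f r - a * r ^ (-(1/2 : ℝ)) * exp (-r)| ≤ C * r ^ (-(3/2 : ℝ)) * exp (-r)) :
    Tendsto (fun r => f r / expWeight r) atTop (𝓝 a) := by
  have hu : Tendsto (fun r => f r * √r * exp r) atTop (𝓝 a) := by
    refine tendsto_iff_norm_sub_tendsto_zero.2 <| squeeze_zero' (.of_forall fun _ => norm_nonneg _)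
      ?_ (tendsto_const_nhds.div_atTop tendsto_id : Tendsto (fun r : ℝ => C / r) atTop (𝓝 0))
    filter_upwards [eventually_ge_atTop 1] with r hr
    have hr0 : 0 < r := by linarith
    have h12 : r ^ (-(1/2 : ℝ)) = (√r)⁻¹ := by rw [rpow_neg hr0.le, sqrt_eq_rpow]
    have h32 : r ^ (-(3/2 : ℝ)) = (√r)⁻¹ / r := by
      rw [show -(3/2 : ℝ) = -(1/2) - 1 by norm_num, rpow_sub hr0, rpow_one, h12]
    have hpos : 0 < √r * exp r := by positivity
    calc ‖f r * √r * exp r - a‖ = |f r - a * r ^ (-(1/2 : ℝ)) * exp (-r)| * (√r * exp r) := by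
          rw [norm_eq_abs, ← abs_of_pos hpos, ← abs_mul, h12, exp_neg]
          congr 1
          field_simp
      _ ≤ C * r ^ (-(3/2 : ℝ)) * exp (-r) * (√r * exp r) := by gcongr; exact h r hr
      _ = C / r := by rw [h32, exp_neg]; field_simp
  have hq : Tendsto (fun r : ℝ => √(1 / r + 1)) atTop (𝓝 1) := by
    simpa using (((tendsto_const_nhds (x := (1:ℝ))).div_atTop tendsto_id).add_const 1).sqrt
  refine (by simpa using hu.mul hq :
    Tendsto (fun r => f r * √r * exp r * √(1 / r + 1)) atTop (𝓝 a)).congr' ?_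
  filter_upwards [eventually_gt_atTop 0] with r hr
  rw [expWeight, div_div_eq_mul_div, exp_neg, div_inv_eq_mul,
    show 1 / r + 1 = (1 + r) / r by field_simp, sqrt_div (by linarith)]
  field_simp

lemma tendsto_expWeight_div_expWeight {ρ : ℝ → ℝ} {b : ℝ}
    (hρ : Tendsto (fun L => L - ρ L) atTop (𝓝 b)) :
    Tendsto (fun L => expWeight (ρ L) / expWeight L) atTop (𝓝 (exp b)) := by
  have hρtop : Tendsto ρ atTop atTop :=
    (tendsto_id.atTop_add hρ.neg).congr fun L => by simp
  have hq : Tendsto (fun L => √(1 + (L - ρ L) / (1 + ρ L))) atTop (𝓝 1) := by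
    simpa using ((hρ.div_atTop (tendsto_atTop_add_const_left _ 1 hρtop)).const_add 1).sqrt
  have he : Tendsto (fun L => exp (L - ρ L) * √(1 + (L - ρ L) / (1 + ρ L))) atTop (𝓝 (exp b)) := by
    simpa using ((continuous_exp.tendsto b).comp hρ).mul hq
  refine he.congr' ?_
  filter_upwards [hρtop.eventually_ge_atTop 0, eventually_ge_atTop 0] with L hρL hL
  have h1 : 1 + (L - ρ L) / (1 + ρ L) = (1 + L) / (1 + ρ L) := by field_simp; ring
  simp only [expWeight, h1, sqrt_div (by linarith : (0:ℝ) ≤ 1 + L)]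
  rw [exp_sub, exp_neg, exp_neg]
  field_simp

lemma exists_abs_le_mul_expWeight {f : ℝ → ℝ} {a : ℝ} (hf : Continuous f)
    (hfa : Tendsto (fun r => f r / expWeight r) atTop (𝓝 a)) :
    ∃ B, ∀ r ≥ 0, |f r| ≤ B * expWeight r := by
  obtain ⟨R, hR⟩ := eventually_atTop.1 (hfa.abs.eventually_lt_const (lt_add_one |a|))
  obtain ⟨M, hM⟩ := (isCompact_Icc (a := 0) (b := R)).exists_bound_of_continuousOn
    (hf.continuousOn.div (continuousOn_expWeight.mono Set.Icc_subset_Ici_self)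
      fun r hr => (expWeight_pos hr.1).ne')
  refine ⟨max M (|a| + 1), fun r hr => ?_⟩
  have hbound : |f r / expWeight r| ≤ max M (|a| + 1) := by
    rcases le_total r R with h | h
    · exact (hM r ⟨hr, h⟩).trans (le_max_left _ _)
    · exact (hR r h).le.trans (le_max_right _ _)
  rwa [abs_div, abs_of_pos (expWeight_pos hr), div_le_iff₀ (expWeight_pos hr)] at hbound

lemma tendsto_comp_div_of_tendsto_div_expWeight {f ρ : ℝ → ℝ} {a b : ℝ}
    (hfa : Tendsto (fun r => f r / expWeight r) atTop (𝓝 a)) (ha : a ≠ 0)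
    (hρ : Tendsto (fun L => L - ρ L) atTop (𝓝 b)) :
    Tendsto (fun L => f (ρ L) / f L) atTop (𝓝 (exp b)) := by
  have hρtop : Tendsto ρ atTop atTop :=
    (tendsto_id.atTop_add hρ.neg).congr fun L => by simp
  have h := ((hfa.comp hρtop).div hfa ha).mul (tendsto_expWeight_div_expWeight hρ)
  rw [div_self ha, one_mul] at h
  refine h.congr' ?_
  filter_upwards [hρtop.eventually_ge_atTop 0, eventually_ge_atTop 0] with L hρL hL
  have := (expWeight_pos hρL).ne'
  have := (expWeight_pos hL).ne'
  simp only [Pi.div_apply, Function.comp_apply]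
  rcases eq_or_ne (f L) 0 with hfL | hfL
  · simp [hfL]
  · field_simp

lemma eventually_pos_of_tendsto_div_expWeight {f : ℝ → ℝ} {a : ℝ}
    (hfa : Tendsto (fun r => f r / expWeight r) atTop (𝓝 a)) (ha : 0 < a) :
    ∀ᶠ r in atTop, 0 < f r := by
  filter_upwards [eventually_ge_atTop 0, hfa.eventually_const_lt ha] with r hr hf
  exact (div_pos_iff_of_pos_right (expWeight_pos hr)).1 hf

lemma abs_sq_mul_le_mul_expWeight_pow {f g : ℝ → ℝ} {B B' : ℝ}
    (hf : ∀ r ≥ 0, |f r| ≤ B * expWeight r) (hg : ∀ r ≥ 0, |g r| ≤ B' * expWeight r) :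
    ∀ r ≥ 0, |f r ^ 2 * g r| ≤ B ^ 2 * B' * expWeight r ^ 3 := fun r hr => by
  rw [abs_mul, abs_pow]
  calc |f r| ^ 2 * |g r| ≤ (B * expWeight r) ^ 2 * (B' * expWeight r) :=
        mul_le_mul (pow_le_pow_left₀ (abs_nonneg _) (hf r hr) 2) (hg r hr) (abs_nonneg _)
          (sq_nonneg _)
    _ = B ^ 2 * B' * expWeight r ^ 3 := by ring

lemma abs_mul_exp_two_mul_le {g : ℝ → ℝ} {B : ℝ} (hgB : ∀ r ≥ 0, |g r| ≤ B * expWeight r ^ 3)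
    {r : ℝ} (hr : 0 ≤ r) : |g r| * exp (2 * r) ≤ B * exp (-r) := by
  have hB : 0 ≤ B := by simpa using (abs_nonneg _).trans (hgB 0 le_rfl)
  calc |g r| * exp (2 * r) ≤ B * exp (-r) ^ 3 * exp (2 * r) := by
        gcongr
        exact (hgB r hr).trans (by gcongr; exacts [(expWeight_pos hr).le, expWeight_le_exp_neg hr])
    _ = B * exp (-r) := by rw [← exp_nat_mul, mul_assoc, ← exp_add]; ring_nf

lemma AntitoneOn.deriv_nonpos_of_isOpen {f : ℝ → ℝ} {s : Set ℝ} {x : ℝ} (hf : AntitoneOn f s)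
    (hs : IsOpen s) (hx : x ∈ s) : deriv f x ≤ 0 := by
  rw [← derivWithin_of_isOpen hs hx]
  exact hf.derivWithin_nonpos

lemma mul_sinh_nonneg (t : ℝ) : 0 ≤ t * sinh t := by
  rcases le_total 0 t with h | h
  · exact mul_nonneg h (sinh_nonneg_iff.2 h)
  · exact mul_nonneg_of_nonpos_of_nonpos h (sinh_nonpos_iff.2 h)


lemma integral_neg_of_nonpos_of_neg_on_isOpen {X : Type*} [TopologicalSpace X] [MeasurableSpace X]
    {μ : Measure X} [μ.IsOpenPosMeasure] {H : X → ℝ} {U : Set X} (hint : Integrable H μ)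
    (hH : ∀ x, H x ≤ 0) (hU : IsOpen U) (hUne : U.Nonempty) (hHU : ∀ x ∈ U, H x < 0) :
    ∫ x, H x ∂μ < 0 := by
  have hpos := (integral_pos_iff_support_of_nonneg (fun x => neg_nonneg.2 (hH x)) hint.neg).2
    ((hU.measure_pos μ hUne).trans_le (measure_mono fun x hx => neg_ne_zero.2 (hHU x hx).ne))
  rw [integral_neg] at hpos
  linarith

section InnerProductSpace

variable {E : Type*} [NormedAddCommGroup E] [InnerProductSpace ℝ E]

lemma tendsto_sub_norm_sub_smul {e : E} (he : ‖e‖ = 1) (z : E) :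
    Tendsto (fun L : ℝ => L - ‖z - L • e‖) atTop (𝓝 ⟪z, e⟫) := by
  have hdist : ∀ L ≥ 0, |‖z - L • e‖ - L| ≤ ‖z‖ := fun L hL => by
    simpa [norm_smul, he, abs_of_nonneg hL] using abs_norm_sub_norm_le (z - L • e) (-(L • e))
  have hratio : Tendsto (fun L : ℝ => ‖z - L • e‖ / L) atTop (𝓝 1) := by
    refine tendsto_iff_norm_sub_tendsto_zero.2 <| squeeze_zero' (.of_forall fun _ => norm_nonneg _)
      ?_ (tendsto_const_nhds.div_atTop tendsto_id : Tendsto (fun L : ℝ => ‖z‖ / L) atTop (𝓝 0))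
    filter_upwards [eventually_gt_atTop 0] with L hL
    rw [norm_eq_abs, ← div_self hL.ne', ← sub_div, abs_div, abs_of_pos hL]
    exact div_le_div_of_nonneg_right (hdist L hL.le) hL.le
  have hlim : Tendsto (fun L : ℝ => (2 * ⟪z, e⟫ - ‖z‖ ^ 2 / L) / (1 + ‖z - L • e‖ / L)) atTop
      (𝓝 ((2 * ⟪z, e⟫ - 0) / (1 + 1))) :=
    ((tendsto_const_nhds.sub (tendsto_const_nhds.div_atTop tendsto_id)).div
      (tendsto_const_nhds.add hratio) (by norm_num))
  rw [show (2 * ⟪z, e⟫ - 0) / (1 + 1) = ⟪z, e⟫ by ring] at hlim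
  refine hlim.congr' ?_
  filter_upwards [eventually_gt_atTop 0] with L hL
  have hsq : ‖z - L • e‖ ^ 2 = ‖z‖ ^ 2 - 2 * L * ⟪z, e⟫ + L ^ 2 := by
    rw [norm_sub_sq_real, inner_smul_right, norm_smul, he, norm_eq_abs, abs_of_pos hL]; ring
  have hpos : 0 < L + ‖z - L • e‖ := by positivity
  field_simp
  nlinarith [hsq]


lemma abs_inner_div_norm_le_one {e : E} (he : ‖e‖ = 1) (z : E) : |⟪z, e⟫ / ‖z‖| ≤ 1 := by
  rw [abs_div, abs_norm]
  exact div_le_one_of_le₀ (by simpa [he] using abs_real_inner_le_norm z e) (norm_nonneg z)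

variable [FiniteDimensional ℝ E] [MeasurableSpace E] [BorelSpace E]

lemma integrable_exp_neg_norm (μ : Measure E) [μ.IsAddHaarMeasure] :
    Integrable (fun x : E => exp (-‖x‖)) μ := by
  set n := Module.finrank ℝ E + 1
  refine ((integrable_one_add_norm (μ := μ) (r := n) (by simp [n])).const_mul
    (exp 1 * n.factorial)).mono' (by fun_prop) (.of_forall fun x => ?_)
  have h1 : 0 < 1 + ‖x‖ := by positivity
  have h := pow_div_factorial_le_exp (1 + ‖x‖) h1.le n
  rw [exp_add, div_le_iff₀ (by positivity)] at h
  rw [norm_eq_abs, abs_of_pos (exp_pos _), rpow_neg h1.le, rpow_natCast, exp_neg, ← div_eq_mul_inv,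
    le_div_iff₀ (by positivity), inv_mul_le_iff₀ (exp_pos _)]
  linarith

lemma integral_mul_exp_inner_mul_inner_div_norm_neg {g : ℝ → ℝ} {e : E} (he : ‖e‖ = 1)
    (hg : ∀ r > 0, g r ≤ 0) (hg' : ∀ᶠ r in atTop, g r < 0)
    (hint : Integrable fun z : E => g ‖z‖ * exp ⟪z, e⟫ * (⟪z, e⟫ / ‖z‖)) :
    ∫ z : E, g ‖z‖ * exp ⟪z, e⟫ * (⟪z, e⟫ / ‖z‖) < 0 := by
  set G : E → ℝ := fun z => g ‖z‖ * exp ⟪z, e⟫ * (⟪z, e⟫ / ‖z‖)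
  set σ := (ℝ ∙ e)ᗮ.reflection
  have hσ : ∀ z, ⟪σ z, e⟫ = -⟪z, e⟫ := fun z => by
    calc ⟪σ z, e⟫ = -⟪σ z, σ e⟫ := by
          rw [Submodule.reflection_orthogonalComplement_singleton_eq_neg, inner_neg_right, neg_neg]
      _ = -⟪z, e⟫ := by rw [σ.inner_map_map]
  -- averaging `G` over the reflection leaves the odd part `sinh` of `exp`
  have hsym : ∀ z, G z + G (σ z) = 2 * g ‖z‖ * (⟪z, e⟫ * sinh ⟪z, e⟫) / ‖z‖ := fun z => by
    simp only [G, hσ, σ.norm_map, sinh_eq]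
    ring
  have hσint : Integrable fun z => G (σ z) := σ.measurePreserving.integrable_comp_of_integrable hint
  obtain ⟨R, hR⟩ := eventually_atTop.1 hg'
  have hneg := integral_neg_of_nonpos_of_neg_on_isOpen (μ := volume)
    (H := fun z => G z + G (σ z)) (hint.add hσint)
    (fun z => ?_) (isOpen_lt continuous_const (by fun_prop) : IsOpen {z : E | max R 0 < ⟪z, e⟫})
    ⟨(max R 0 + 1) • e, ?_⟩ fun z hz => ?_
  · rw [integral_add hint hσint,
      σ.measurePreserving.integral_comp σ.toHomeomorph.measurableEmbedding G] at hneg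
    linarith
  · rw [hsym]
    rcases (norm_nonneg z).eq_or_lt with hz | hz
    · simp [← hz]
    · exact div_nonpos_of_nonpos_of_nonneg
        (mul_nonpos_of_nonpos_of_nonneg (by linarith [hg _ hz]) (mul_sinh_nonneg _)) hz.le
  · change max R 0 < ⟪(max R 0 + 1) • e, e⟫
    rw [real_inner_smul_left, real_inner_self_eq_norm_sq, he]
    linarith
  · have ht : max R 0 < ⟪z, e⟫ := hz
    have hnorm : ⟪z, e⟫ ≤ ‖z‖ := by simpa [he] using real_inner_le_norm z e
    have ht0 : 0 < ⟪z, e⟫ := by linarith [le_max_right R 0]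
    rw [hsym]
    exact div_neg_of_neg_of_pos (mul_neg_of_neg_of_pos
      (by linarith [hR ‖z‖ (by linarith [le_max_left R 0])]) (mul_pos ht0 (sinh_pos_iff.2 ht0)))
      (by linarith)

lemma integrable_mul_exp_inner {g : ℝ → ℝ} {h : E → ℝ} {e : E} {B : ℝ} (he : ‖e‖ = 1)
    (hg : Continuous g) (hgB : ∀ r ≥ 0, |g r| ≤ B * expWeight r ^ 3)
    (hh : AEStronglyMeasurable h) (hh1 : ∀ z, |h z| ≤ 1) :
    Integrable fun z : E => g ‖z‖ * exp ⟪z, e⟫ * h z := by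
  refine ((integrable_exp_neg_norm volume).const_mul B).mono' (by fun_prop)
    (.of_forall fun z => ?_)
  have hinner : ⟪z, e⟫ ≤ 2 * ‖z‖ := by
    linarith [real_inner_le_norm z e, norm_nonneg z, show ‖z‖ * ‖e‖ = ‖z‖ by rw [he, mul_one]]
  calc ‖g ‖z‖ * exp ⟪z, e⟫ * h z‖ ≤ |g ‖z‖| * exp (2 * ‖z‖) * 1 := by
        rw [norm_eq_abs, abs_mul, abs_mul, abs_exp]
        gcongr
        exact hh1 z
    _ ≤ B * exp (-‖z‖) := by simpa using abs_mul_exp_two_mul_le hgB (norm_nonneg z)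

lemma tendsto_integral_mul_norm_sub_smul_div {f g : ℝ → ℝ} {h : E → ℝ} {e : E} {a B : ℝ}
    (he : ‖e‖ = 1) (hf : Continuous f) (hfa : Tendsto (fun r => f r / expWeight r) atTop (𝓝 a))
    (ha : 0 < a) (hg : Continuous g) (hgB : ∀ r ≥ 0, |g r| ≤ B * expWeight r ^ 3)
    (hh : AEStronglyMeasurable h) (hh1 : ∀ z, |h z| ≤ 1) :
    Tendsto (fun L : ℝ => (∫ z, g ‖z‖ * f ‖z - L • e‖ * h z) / f L) atTop
      (𝓝 (∫ z, g ‖z‖ * exp ⟪z, e⟫ * h z)) := by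
  obtain ⟨Bf, hBf⟩ := exists_abs_le_mul_expWeight hf hfa
  have hBf0 : 0 ≤ Bf := by simpa using (abs_nonneg _).trans (hBf 0 le_rfl)
  have hlow : ∀ᶠ L in atTop, 0 ≤ L ∧ a / 2 * expWeight L ≤ f L := by
    filter_upwards [eventually_ge_atTop 0, hfa.eventually (le_mem_nhds (half_lt_self ha))]
      with L hL hfL
    exact ⟨hL, by rwa [le_div_iff₀ (expWeight_pos hL)] at hfL⟩
  simp_rw [← integral_div]
  refine tendsto_integral_filter_of_dominated_convergence (fun z => 2 * Bf / a * (B * exp (-‖z‖)))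
    (.of_forall fun L => by fun_prop) ?_
    (((integrable_exp_neg_norm volume).const_mul B).const_mul _)
    (.of_forall fun z => ?_)
  · filter_upwards [hlow] with L ⟨hL, hfL⟩
    refine .of_forall fun z => ?_
    have hφL := expWeight_pos hL
    have hfL0 : 0 < f L := (mul_pos (half_pos ha) hφL).trans_le hfL
    have htri : L ≤ ‖z - L • e‖ + ‖z‖ := by
      simpa [norm_smul, he, abs_of_nonneg hL, add_comm] using norm_sub_le z (z - L • e)
    have hratio : |f ‖z - L • e‖| / f L ≤ 2 * Bf / a * exp (2 * ‖z‖) :=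
      calc |f ‖z - L • e‖| / f L ≤ Bf * (exp (2 * ‖z‖) * expWeight L) / (a / 2 * expWeight L) := by
            gcongr
            exact (hBf _ (norm_nonneg _)).trans (by
              gcongr; exact expWeight_le_exp_mul (norm_nonneg _) (norm_nonneg _) hL htri)
        _ = 2 * Bf / a * exp (2 * ‖z‖) := by field_simp
    calc ‖g ‖z‖ * f ‖z - L • e‖ * h z / f L‖ = |g ‖z‖| * (|f ‖z - L • e‖| / f L) * |h z| := by
          rw [norm_eq_abs, abs_div, abs_mul, abs_mul, abs_of_pos hfL0]; ring
      _ ≤ |g ‖z‖| * (2 * Bf / a * exp (2 * ‖z‖)) * 1 := by gcongr; exact hh1 z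
      _ = 2 * Bf / a * (|g ‖z‖| * exp (2 * ‖z‖)) := by ring
      _ ≤ 2 * Bf / a * (B * exp (-‖z‖)) :=
          mul_le_mul_of_nonneg_left (abs_mul_exp_two_mul_le hgB (norm_nonneg z)) (by positivity)
  · have := ((tendsto_comp_div_of_tendsto_div_expWeight hfa ha.ne'
      (tendsto_sub_norm_sub_smul he z)).const_mul (g ‖z‖)).mul_const (h z)
    exact this.congr fun L => by ring

theorem exists_tendsto_integral_sq_mul_deriv_mul_norm_sub_smul_div {w : ℝ → ℝ} {A₀ : ℝ} {e : E}
    (he : ‖e‖ = 1) (hA₀ : 0 < A₀) (hw : Continuous w) (hw' : Continuous (deriv w))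
    (hderiv : ∀ r > 0, deriv w r ≤ 0)
    (hwA : Tendsto (fun r => w r / expWeight r) atTop (𝓝 A₀))
    (hw'A : Tendsto (fun r => deriv w r / expWeight r) atTop (𝓝 (-A₀))) :
    ∃ c₀ > 0, Tendsto (fun L : ℝ =>
      (∫ z : E, w ‖z‖ ^ 2 * deriv w ‖z‖ * w ‖z - L • e‖ * (⟪z, e⟫ / ‖z‖)) / w L)
      atTop (𝓝 (-c₀)) := by
  obtain ⟨B, hB⟩ := exists_abs_le_mul_expWeight hw hwA
  obtain ⟨B', hB'⟩ := exists_abs_le_mul_expWeight hw' hw'A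
  have hgB := abs_sq_mul_le_mul_expWeight_pow hB hB'
  have hmeas : AEStronglyMeasurable fun z : E => ⟪z, e⟫ / ‖z‖ :=
    (by fun_prop : Measurable fun z : E => ⟪z, e⟫ / ‖z‖).aestronglyMeasurable
  have hneg : ∀ᶠ r in atTop, w r ^ 2 * deriv w r < 0 := by
    filter_upwards [eventually_pos_of_tendsto_div_expWeight hwA hA₀,
      eventually_pos_of_tendsto_div_expWeight (by simpa only [neg_div, neg_neg] using hw'A.neg :
        Tendsto (fun r => -deriv w r / expWeight r) atTop (𝓝 A₀)) hA₀] with r h h'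
    exact mul_neg_of_pos_of_neg (pow_pos h 2) (neg_pos.1 h')
  refine ⟨_, neg_pos.2 (integral_mul_exp_inner_mul_inner_div_norm_neg he
    (fun r hr => mul_nonpos_of_nonneg_of_nonpos (sq_nonneg _) (hderiv r hr)) hneg
    (integrable_mul_exp_inner he (by fun_prop) hgB hmeas (abs_inner_div_norm_le_one he))), ?_⟩
  rw [neg_neg]
  exact tendsto_integral_mul_norm_sub_smul_div he hw hwA hA₀ (by fun_prop) hgB hmeas
    (abs_inner_div_norm_le_one he)

end InnerProductSpace

theorem stmt19_general (A₀ : ℝ) (hA₀ : 0 < A₀) (w : ℝ → ℝ)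
    (hsm : ContDiff ℝ 1 w)
    (hdec : StrictAntiOn w (Set.Ioi 0))
    (hasym : ∃ C : ℝ, 0 < C ∧ ∀ r ≥ 1,
      |w r - A₀ * r ^ (-(1/2 : ℝ)) * Real.exp (-r)| ≤ C * r ^ (-(3/2 : ℝ)) * Real.exp (-r) ∧
      |deriv w r + A₀ * r ^ (-(1/2 : ℝ)) * Real.exp (-r)| ≤ C * r ^ (-(3/2 : ℝ)) * Real.exp (-r)) :
    ∃ c₀ > 0, Filter.Tendsto (fun L : ℝ =>
      (∫ z : EuclideanSpace ℝ (Fin 2),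
        (w ‖z‖)^2 * deriv w ‖z‖ * w ‖z + (-L) • (EuclideanSpace.single (0 : Fin 2) (1 : ℝ))‖ * (z 0 / ‖z‖)) / w L)
      Filter.atTop (nhds (-c₀)) := by
  obtain ⟨C, -, hC⟩ := hasym
  set e : EuclideanSpace ℝ (Fin 2) := EuclideanSpace.single 0 1
  have hcoord : ∀ z : EuclideanSpace ℝ (Fin 2), ⟪z, e⟫ = z 0 := fun z => by
    simp [e, EuclideanSpace.inner_single_right]
  obtain ⟨c₀, hc₀, h⟩ := exists_tendsto_integral_sq_mul_deriv_mul_norm_sub_smul_div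
    (by simp [e] : ‖e‖ = 1) hA₀ hsm.continuous (hsm.continuous_deriv le_rfl)
    (fun r hr => hdec.antitoneOn.deriv_nonpos_of_isOpen isOpen_Ioi hr)
    (tendsto_div_expWeight_of_abs_sub_le fun r hr => (hC r hr).1)
    (tendsto_div_expWeight_of_abs_sub_le fun r hr => by simpa using (hC r hr).2)
  exact ⟨c₀, hc₀, by simpa only [hcoord, neg_smul, ← sub_eq_add_neg] using h⟩

theorem stmt19 (A₀ : ℝ) (hA₀ : 0 < A₀) (w : ℝ → ℝ)
    (hsm : ContDiff ℝ 1 w)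
    (hpos : ∀ r > 0, 0 < w r) (hdec : StrictAntiOn w (Set.Ioi 0))
    (hasym : ∃ C : ℝ, 0 < C ∧ ∀ r ≥ 1,
      |w r - A₀ * r ^ (-(1/2 : ℝ)) * Real.exp (-r)| ≤ C * r ^ (-(3/2 : ℝ)) * Real.exp (-r) ∧
      |deriv w r + A₀ * r ^ (-(1/2 : ℝ)) * Real.exp (-r)| ≤ C * r ^ (-(3/2 : ℝ)) * Real.exp (-r)) :
    ∃ c₀ > 0, Filter.Tendsto (fun L : ℝ =>
      (∫ z : EuclideanSpace ℝ (Fin 2),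
        (w ‖z‖)^2 * deriv w ‖z‖ * w ‖z + (-L) • (EuclideanSpace.single (0 : Fin 2) (1 : ℝ))‖ * (z 0 / ‖z‖)) / w L)
      Filter.atTop (nhds (-c₀)) :=
  stmt19_general A₀ hA₀ w hsm hdec hasym
end
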